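/- arXiv:2405.03014 — 4 statements merged into one kernel-verified Lean document; each statement's English description precedes it below -/
import Mathlib

section
/- Breiman's theorem: let Z and Θ be independent random variables, Z with distribution tail regularly varying with index −α (α>0), Θ nonnegative, not a.s. zero, with E[Θ^{α+ε}] < ∞ for some ε>0. Then P(ΘZ > x) ∼ E[Θ^α] P(Z > x) as x→∞; in particular the distribution of ΘZ is also regularly varying with index −α. -/
open MeasureTheory ProbabilityTheory Filter Topology

set_option maxHeartbeats 2000000 in
/-- Breiman's theorem: if `Z` has a regularly varying tail of index `-α` (`α > 0`),
`Θ ≥ 0` is independent of `Z`, not a.s. zero, and `E[Θ^{α+ε}] < ∞` for some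
`ε > 0`, then `P(ΘZ > x) ∼ E[Θ^α] P(Z > x)` as `x → ∞`; in particular the tail
of `ΘZ` is regularly varying with the same index `-α`. -/
theorem breiman
    {Ω : Type*} [MeasurableSpace Ω] (P : Measure Ω) [IsProbabilityMeasure P]
    (Z Θ : Ω → ℝ) (hZ : Measurable Z) (hΘ : Measurable Θ)
    (α : ℝ) (hα : 0 < α)
    (hpos : ∀ x : ℝ, 0 < (P {ω | Z ω > x}).toReal)
    (hRV : ∀ t : ℝ, 0 < t →
      Tendsto (fun x => (P {ω | Z ω > t * x}).toReal / (P {ω | Z ω > x}).toReal)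
        atTop (𝓝 (t ^ (-α))))
    (hindep : IndepFun Θ Z P)
    (hΘnonneg : ∀ᵐ ω ∂P, 0 ≤ Θ ω)
    (hΘnondeg : 0 < P {ω | Θ ω > 0})
    (hmom : ∃ ε : ℝ, 0 < ε ∧ Integrable (fun ω => Θ ω ^ (α + ε)) P) :
    Tendsto (fun x => (P {ω | Θ ω * Z ω > x}).toReal /
        ((∫ ω, Θ ω ^ α ∂P) * (P {ω | Z ω > x}).toReal)) atTop (𝓝 1) ∧
    (∀ t : ℝ, 0 < t →
      Tendsto (fun x => (P {ω | Θ ω * Z ω > t * x}).toReal /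
          (P {ω | Θ ω * Z ω > x}).toReal) atTop (𝓝 (t ^ (-α)))) := by
  classical
  obtain ⟨ε, hε, hmomP⟩ := hmom
  set V : ℝ → ℝ := fun x => (P {ω | Z ω > x}).toReal with hVdef
  set W : ℝ → ℝ := fun x => (P {ω | Θ ω * Z ω > x}).toReal with hWdef
  set m : ℝ := ∫ ω, Θ ω ^ α ∂P with hmdef
  set μ : Measure ℝ := P.map Θ with hμdef
  set ν : Measure ℝ := P.map Z with hνdef
  haveI : IsProbabilityMeasure μ := Measure.isProbabilityMeasure_map hΘ.aemeasurable
  haveI : IsProbabilityMeasure ν := Measure.isProbabilityMeasure_map hZ.aemeasurable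
  have hVpos : ∀ x, 0 < V x := hpos
  have hVnn : ∀ x, 0 ≤ V x := fun x => (hVpos x).le
  have hVle1 : ∀ x, V x ≤ 1 := by
    intro x
    have : (P {ω | Z ω > x}) ≤ 1 := prob_le_one
    simpa [hVdef] using ENNReal.toReal_mono ENNReal.one_ne_top this
  have hVanti : Antitone V := by
    intro x y hxy
    exact ENNReal.toReal_mono (measure_ne_top _ _)
      (measure_mono (fun ω hω => lt_of_le_of_lt hxy hω))
  have hRV' : ∀ t : ℝ, 0 < t →
      Tendsto (fun x => V (t * x) / V x) atTop (𝓝 (t ^ (-α))) := hRV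
  -- product representation
  have hS : ∀ x : ℝ, MeasurableSet {p : ℝ × ℝ | p.1 * p.2 > x} := by
    intro x
    exact measurableSet_lt measurable_const (measurable_fst.mul measurable_snd)
  set F : ℝ → ℝ → ℝ := fun x θ => (ν {z | θ * z > x}).toReal with hFdef
  have hFmeas : ∀ x, Measurable (F x) := by
    intro x
    exact (measurable_measure_prodMk_left (hS x)).ennreal_toReal
  have hFnn : ∀ x θ, 0 ≤ F x θ := fun x θ => ENNReal.toReal_nonneg
  have hFle : ∀ x θ, F x θ ≤ 1 := by
    intro x θ
    simpa [hFdef] using ENNReal.toReal_mono ENNReal.one_ne_top (prob_le_one (μ := ν))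
  have hW_int : ∀ x, W x = ∫ θ, F x θ ∂μ := by
    intro x
    have hmap : P.map (fun ω => (Θ ω, Z ω)) = μ.prod ν :=
      (indepFun_iff_map_prod_eq_prod_map_map hΘ.aemeasurable hZ.aemeasurable).mp hindep
    have h1 : P {ω | Θ ω * Z ω > x} = (μ.prod ν) {p : ℝ × ℝ | p.1 * p.2 > x} := by
      rw [← hmap, Measure.map_apply (hΘ.prodMk hZ) (hS x)]
      rfl
    rw [hWdef]
    simp only [h1, Measure.prod_apply (hS x)]
    rw [← integral_toReal (measurable_measure_prodMk_left (hS x)).aemeasurable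
      (ae_of_all _ fun θ => measure_lt_top ν _)]
    rfl
  have hFV : ∀ x : ℝ, ∀ θ : ℝ, 0 < θ → F x θ = V (x / θ) := by
    intro x θ hθ
    have hset : {z : ℝ | θ * z > x} = Set.Ioi (x / θ) := by
      ext z
      simp only [Set.mem_setOf_eq, Set.mem_Ioi, gt_iff_lt]
      rw [div_lt_iff₀ hθ, mul_comm]
    have : ν {z | θ * z > x} = P {ω | Z ω > x / θ} := by
      rw [hset, hνdef, Measure.map_apply hZ measurableSet_Ioi]
      rfl
    rw [hFdef]
    simp only [this]; rfl
  have hF0 : ∀ x : ℝ, 0 < x → F x 0 = 0 := by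
    intro x hx
    have hset : {z : ℝ | (0:ℝ) * z > x} = ∅ := by
      ext z
      simp only [Set.mem_setOf_eq, zero_mul, Set.mem_empty_iff_false, iff_false, gt_iff_lt,
        not_lt]
      exact hx.le
    simp only [hFdef]
    rw [hset]
    simp
  -- a.e. nonneg on μ
  have hμ0 : ∀ᵐ θ ∂μ, 0 ≤ θ := by
    rw [hμdef, ae_map_iff hΘ.aemeasurable measurableSet_Ici]
    exact hΘnonneg
  -- integrability transfers
  have hints : Integrable (fun θ => θ ^ (α + ε)) μ := by
    rw [hμdef]
    refine (integrable_map_measure ?_ hΘ.aemeasurable).mpr hmomP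
    exact (by fun_prop : Measurable fun θ : ℝ => θ ^ (α + ε)).aestronglyMeasurable
  have hdomInt : ∀ p : ℝ, 0 < p → p ≤ α + ε → Integrable (fun θ : ℝ => θ ^ p) μ := by
    intro p hp hple
    refine ((integrable_const (1:ℝ)).add hints).mono'
      (by fun_prop : Measurable fun θ : ℝ => θ ^ p).aestronglyMeasurable ?_
    filter_upwards [hμ0] with θ hθ
    rw [Real.norm_eq_abs, abs_of_nonneg (Real.rpow_nonneg hθ p)]
    rcases le_total θ 1 with h1 | h1
    · have : θ ^ p ≤ 1 := Real.rpow_le_one hθ h1 hp.le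
      have h2 : 0 ≤ θ ^ (α + ε) := Real.rpow_nonneg hθ _
      simpa using by linarith
    · have : θ ^ p ≤ θ ^ (α + ε) := Real.rpow_le_rpow_of_exponent_le h1 hple
      simpa using by linarith
  have hm_eq : m = ∫ θ, θ ^ α ∂μ := by
    rw [hmdef, hμdef, integral_map hΘ.aemeasurable
      (by fun_prop : Measurable fun θ : ℝ => θ ^ α).aestronglyMeasurable]
  have hm_pos : 0 < m := by
    rw [hm_eq]
    rw [integral_pos_iff_support_of_nonneg_ae
      (by filter_upwards [hμ0] with θ hθ using Real.rpow_nonneg hθ α)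
      (hdomInt α hα (by linarith))]
    have hsub : Set.Ioi (0:ℝ) ⊆ Function.support fun θ : ℝ => θ ^ α := by
      intro θ hθ
      exact (Real.rpow_pos_of_pos hθ α).ne'
    have : μ (Set.Ioi (0:ℝ)) = P {ω | Θ ω > 0} := by
      rw [hμdef, Measure.map_apply hΘ measurableSet_Ioi]
      rfl
    calc (0:ENNReal) < μ (Set.Ioi 0) := by rw [this]; exact hΘnondeg
    _ ≤ _ := measure_mono hsub
  -- Potter-type upper bound via doubling
  set β : ℝ := α + ε / 2 with hβdef
  have hβpos : 0 < β := by rw [hβdef]; linarith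
  have hβle : β ≤ α + ε := by rw [hβdef]; linarith
  set K : ℝ := (2:ℝ) ^ β with hKdef
  have hK1 : 1 < K := by
    rw [hKdef]
    calc (1:ℝ) = (2:ℝ) ^ (0:ℝ) := by rw [Real.rpow_zero]
    _ < (2:ℝ) ^ β := Real.rpow_lt_rpow_of_exponent_lt one_lt_two hβpos
  have hKpos : 0 < K := lt_trans one_pos hK1
  have hA' : ∀ᶠ x in atTop, V (x / 2) ≤ K * V x := by
    have hlim := hRV' (1/2) (by norm_num)
    have hval : ((1:ℝ)/2) ^ (-α) = (2:ℝ) ^ α := by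
      rw [one_div, Real.inv_rpow (by norm_num : (0:ℝ) ≤ 2), ← Real.rpow_neg (by norm_num : (0:ℝ) ≤ 2),
        neg_neg]
    rw [hval] at hlim
    have h2K : (2:ℝ) ^ α < K := by
      rw [hKdef]; exact Real.rpow_lt_rpow_of_exponent_lt one_lt_two (by rw [hβdef]; linarith)
    filter_upwards [hlim.eventually_lt_const h2K] with x hx
    have h12 : (1/2 : ℝ) * x = x / 2 := by ring
    rw [h12] at hx
    exact le_of_lt ((div_lt_iff₀ (hVpos x)).mp hx)
  obtain ⟨x₀', hx₀'⟩ := eventually_atTop.mp hA'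
  set x₀ : ℝ := max x₀' 1 with hx₀def
  have hx₀1 : (1:ℝ) ≤ x₀ := le_max_right _ _
  have hx₀pos : (0:ℝ) < x₀ := lt_of_lt_of_le one_pos hx₀1
  have hA : ∀ x : ℝ, x₀ ≤ x → V (x / 2) ≤ K * V x := fun x hx =>
    hx₀' x (le_trans (le_max_left _ _) hx)
  have iterA : ∀ n : ℕ, ∀ x : ℝ, x₀ * 2 ^ n ≤ x → V (x / 2 ^ n) ≤ K ^ n * V x := by
    intro n
    induction n with
    | zero => intro x hx; simp
    | succ n ih =>
      intro x hx
      rw [pow_succ] at hx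
      have hx2 : x₀ * 2 ^ n ≤ x / 2 := by rw [← mul_assoc] at hx; linarith
      have h2n1 : (1:ℝ) ≤ 2 ^ n := one_le_pow₀ one_le_two
      have hxx₀ : x₀ ≤ x := by nlinarith
      have h1 : x / 2 ^ (n + 1) = (x / 2) / 2 ^ n := by
        rw [div_div, pow_succ]; ring_nf
      calc V (x / 2 ^ (n + 1)) = V ((x / 2) / 2 ^ n) := by rw [h1]
      _ ≤ K ^ n * V (x / 2) := ih _ hx2
      _ ≤ K ^ n * (K * V x) := by
          exact mul_le_mul_of_nonneg_left (hA x hxx₀) (pow_nonneg hKpos.le n)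
      _ = K ^ (n + 1) * V x := by ring
  have potter : ∀ θ : ℝ, 1 ≤ θ → ∀ x : ℝ, 2 * θ * x₀ ≤ x → V (x / θ) ≤ K * θ ^ β * V x := by
    intro θ hθ x hx
    have hθ0 : (0:ℝ) < θ := lt_of_lt_of_le one_pos hθ
    have hx0 : (0:ℝ) < x := lt_of_lt_of_le (by positivity) hx
    set n : ℕ := ⌈Real.logb 2 θ⌉₊ with hndef
    have hlogb0 : 0 ≤ Real.logb 2 θ := Real.logb_nonneg one_lt_two hθ
    have hθ2n : θ ≤ 2 ^ n := by
      calc θ = 2 ^ Real.logb 2 θ := (Real.rpow_logb two_pos (by norm_num) hθ0).symm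
      _ ≤ 2 ^ (n:ℝ) := Real.rpow_le_rpow_of_exponent_le one_le_two (Nat.le_ceil _)
      _ = 2 ^ n := Real.rpow_natCast 2 n
    have h2n : (2:ℝ) ^ n ≤ 2 * θ := by
      calc (2:ℝ) ^ n = 2 ^ (n:ℝ) := (Real.rpow_natCast 2 n).symm
      _ ≤ 2 ^ (Real.logb 2 θ + 1) :=
          Real.rpow_le_rpow_of_exponent_le one_le_two (le_of_lt (Nat.ceil_lt_add_one hlogb0))
      _ = 2 ^ Real.logb 2 θ * 2 := by rw [Real.rpow_add two_pos, Real.rpow_one]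
      _ = 2 * θ := by rw [Real.rpow_logb two_pos (by norm_num) hθ0]; ring
    have hxn : x₀ * 2 ^ n ≤ x := by nlinarith
    have h1 : V (x / θ) ≤ V (x / 2 ^ n) :=
      hVanti (div_le_div_of_nonneg_left hx0.le hθ0 hθ2n)
    have h2 : V (x / 2 ^ n) ≤ K ^ n * V x := iterA n x hxn
    have h3 : K ^ n ≤ K * θ ^ β := by
      have hKn : K ^ n = ((2:ℝ) ^ n) ^ β := by
        rw [hKdef, ← Real.rpow_natCast ((2:ℝ) ^ β) n, ← Real.rpow_natCast (2:ℝ) n,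
          ← Real.rpow_mul (by norm_num : (0:ℝ) ≤ 2), ← Real.rpow_mul (by norm_num : (0:ℝ) ≤ 2),
          mul_comm]
      rw [hKn]
      calc ((2:ℝ) ^ n) ^ β ≤ (2 * θ) ^ β := Real.rpow_le_rpow (by positivity) h2n hβpos.le
      _ = K * θ ^ β := by rw [Real.mul_rpow (by norm_num : (0:ℝ) ≤ 2) hθ0.le, hKdef]
    calc V (x / θ) ≤ K ^ n * V x := le_trans h1 h2
    _ ≤ K * θ ^ β * V x := mul_le_mul_of_nonneg_right h3 (hVnn x)
  -- lower bound on V via halving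
  set k : ℝ := (2:ℝ) ^ (-β) with hkdef
  have hk0 : 0 < k := Real.rpow_pos_of_pos two_pos _
  have hB' : ∀ᶠ x in atTop, k * V x ≤ V (2 * x) := by
    have hlim := hRV' 2 two_pos
    have hkα : k < (2:ℝ) ^ (-α) := by
      rw [hkdef]
      exact Real.rpow_lt_rpow_of_exponent_lt one_lt_two (by rw [hβdef]; linarith)
    filter_upwards [hlim.eventually_const_lt hkα] with x hx
    exact le_of_lt ((lt_div_iff₀ (hVpos x)).mp hx)
  obtain ⟨x₁', hx₁'⟩ := eventually_atTop.mp hB'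
  set x₁ : ℝ := max x₁' 1 with hx₁def
  have hx₁1 : (1:ℝ) ≤ x₁ := le_max_right _ _
  have hx₁pos : (0:ℝ) < x₁ := lt_of_lt_of_le one_pos hx₁1
  have hB : ∀ x : ℝ, x₁ ≤ x → k * V x ≤ V (2 * x) := fun x hx =>
    hx₁' x (le_trans (le_max_left _ _) hx)
  have iterB : ∀ n : ℕ, k ^ n * V x₁ ≤ V (2 ^ n * x₁) := by
    intro n
    induction n with
    | zero => simp
    | succ n ih =>
      have hx1n : x₁ ≤ 2 ^ n * x₁ :=
        le_mul_of_one_le_left hx₁pos.le (one_le_pow₀ one_le_two)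
      calc k ^ (n + 1) * V x₁ = k * (k ^ n * V x₁) := by ring
      _ ≤ k * V (2 ^ n * x₁) := mul_le_mul_of_nonneg_left ih hk0.le
      _ ≤ V (2 * (2 ^ n * x₁)) := hB _ hx1n
      _ = V (2 ^ (n + 1) * x₁) := by rw [pow_succ]; ring_nf
  have hrpow_anti : ∀ a b : ℝ, 0 < a → a ≤ b → b ^ (-β) ≤ a ^ (-β) := by
    intro a b ha hab
    rw [Real.rpow_neg ha.le, Real.rpow_neg (le_trans ha.le hab)]
    exact inv_anti₀ (Real.rpow_pos_of_pos ha β) (Real.rpow_le_rpow ha.le hab hβpos.le)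
  set c : ℝ := V x₁ * (2 / x₁) ^ (-β) with hcdef
  have hc0 : 0 < c := mul_pos (hVpos x₁) (Real.rpow_pos_of_pos (by positivity) _)
  have lower : ∀ x : ℝ, x₁ ≤ x → c * x ^ (-β) ≤ V x := by
    intro x hx
    have hx0 : (0:ℝ) < x := lt_of_lt_of_le hx₁pos hx
    set n : ℕ := ⌊Real.logb 2 (x / x₁)⌋₊ with hndef
    have hq1 : (1:ℝ) ≤ x / x₁ := (one_le_div hx₁pos).mpr hx
    have hq0 : (0:ℝ) < x / x₁ := lt_of_lt_of_le one_pos hq1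
    have hlog0 : 0 ≤ Real.logb 2 (x / x₁) := Real.logb_nonneg one_lt_two hq1
    have h2n_le : (2:ℝ) ^ n ≤ x / x₁ := by
      calc (2:ℝ) ^ n = 2 ^ (n:ℝ) := (Real.rpow_natCast 2 n).symm
      _ ≤ 2 ^ Real.logb 2 (x / x₁) :=
          Real.rpow_le_rpow_of_exponent_le one_le_two (Nat.floor_le hlog0)
      _ = x / x₁ := Real.rpow_logb two_pos (by norm_num) hq0
    have hx_lt : x ≤ 2 ^ (n + 1) * x₁ := by
      have h1 : x / x₁ < 2 ^ ((n:ℝ) + 1) := by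
        calc x / x₁ = 2 ^ Real.logb 2 (x / x₁) :=
            (Real.rpow_logb two_pos (by norm_num) hq0).symm
        _ < 2 ^ ((n:ℝ) + 1) :=
            Real.rpow_lt_rpow_of_exponent_lt one_lt_two (Nat.lt_floor_add_one _)
      have h2 : (2:ℝ) ^ ((n:ℝ) + 1) = (2:ℝ) ^ (n + 1) := by
        rw [← Real.rpow_natCast 2 (n + 1)]
        push_cast
        ring_nf
      rw [h2] at h1
      calc x = (x / x₁) * x₁ := by field_simp
      _ ≤ 2 ^ (n + 1) * x₁ := mul_le_mul_of_nonneg_right h1.le hx₁pos.le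
    have hkn : k ^ (n + 1) = ((2:ℝ) ^ (n + 1)) ^ (-β) := by
      rw [hkdef, ← Real.rpow_natCast ((2:ℝ) ^ (-β)) (n + 1), ← Real.rpow_natCast (2:ℝ) (n + 1),
        ← Real.rpow_mul (by norm_num : (0:ℝ) ≤ 2), ← Real.rpow_mul (by norm_num : (0:ℝ) ≤ 2),
        mul_comm]
    have h2n1 : (2:ℝ) ^ (n + 1) ≤ 2 * (x / x₁) := by
      rw [pow_succ]
      nlinarith
    have hstep : c * x ^ (-β) ≤ k ^ (n + 1) * V x₁ := by
      have he : (2 * (x / x₁)) ^ (-β) = (2 / x₁) ^ (-β) * x ^ (-β) := by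
        rw [← Real.mul_rpow (by positivity) hx0.le]
        congr 1
        field_simp
      have h3 : (2 * (x / x₁)) ^ (-β) ≤ ((2:ℝ) ^ (n + 1)) ^ (-β) :=
        hrpow_anti _ _ (by positivity) h2n1
      rw [hkn]
      calc c * x ^ (-β) = V x₁ * ((2 / x₁) ^ (-β) * x ^ (-β)) := by rw [hcdef]; ring
      _ = V x₁ * (2 * (x / x₁)) ^ (-β) := by rw [he]
      _ ≤ V x₁ * ((2:ℝ) ^ (n + 1)) ^ (-β) := mul_le_mul_of_nonneg_left h3 (hVnn x₁)
      _ = ((2:ℝ) ^ (n + 1)) ^ (-β) * V x₁ := by ring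
    calc c * x ^ (-β) ≤ k ^ (n + 1) * V x₁ := hstep
    _ ≤ V (2 ^ (n + 1) * x₁) := iterB (n + 1)
    _ ≤ V x := hVanti hx_lt
  -- Markov inequality for μ
  set M : ℝ := ∫ θ, θ ^ (α + ε) ∂μ with hMdef
  have hM0 : 0 ≤ M := integral_nonneg_of_ae (by
    filter_upwards [hμ0] with θ hθ using Real.rpow_nonneg hθ _)
  have hMark : ∀ a : ℝ, 0 < a → (μ {θ | a < θ}).toReal ≤ M / a ^ (α + ε) := by
    intro a ha
    have hsub : {θ : ℝ | a < θ} ⊆ {θ : ℝ | a ^ (α + ε) ≤ θ ^ (α + ε)} := by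
      intro θ hθ
      exact (Real.rpow_le_rpow ha.le (le_of_lt hθ) (by linarith))
    have h1 : (μ {θ | a < θ}).toReal ≤ (μ {θ | a ^ (α + ε) ≤ θ ^ (α + ε)}).toReal :=
      ENNReal.toReal_mono (measure_ne_top _ _) (measure_mono hsub)
    have h2 := mul_meas_ge_le_integral_of_nonneg
      (by filter_upwards [hμ0] with θ hθ using Real.rpow_nonneg hθ (α + ε) :
        0 ≤ᵐ[μ] fun θ : ℝ => θ ^ (α + ε)) hints (a ^ (α + ε))
    have ha' : 0 < a ^ (α + ε) := Real.rpow_pos_of_pos ha _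
    rw [le_div_iff₀ ha']
    calc (μ {θ | a < θ}).toReal * a ^ (α + ε)
        ≤ (μ {θ | a ^ (α + ε) ≤ θ ^ (α + ε)}).toReal * a ^ (α + ε) := by
          exact mul_le_mul_of_nonneg_right h1 ha'.le
    _ ≤ M := by rw [hMdef]; simp only [Measure.real_def] at h2; linarith [h2]
  -- decomposition of W x / V x
  set G : ℝ → ℝ → ℝ := fun x θ => F x θ / V x with hGdef
  have hGmeas : ∀ x, Measurable (G x) := fun x => (hFmeas x).div_const _
  have hGnn : ∀ x θ, 0 ≤ G x θ := fun x θ => div_nonneg (hFnn x θ) (hVnn x)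
  have hGle : ∀ x θ, G x θ ≤ 1 / V x := fun x θ => by
    exact div_le_div₀ zero_le_one (hFle x θ) (hVpos x) le_rfl
  have hGint : ∀ x, Integrable (G x) μ := by
    intro x
    refine (integrable_const (1 / V x)).mono' (hGmeas x).aestronglyMeasurable ?_
    refine ae_of_all _ fun θ => ?_
    rw [Real.norm_eq_abs, abs_of_nonneg (hGnn x θ)]
    exact hGle x θ
  -- the splitting sets
  have hsplit : ∀ x : ℝ, W x / V x =
      (∫ θ, (Set.Iic (x / (2 * x₀))).indicator (G x) θ ∂μ) +
      (∫ θ, (Set.Ioi (x / (2 * x₀))).indicator (G x) θ ∂μ) := by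
    intro x
    have h1 : W x / V x = ∫ θ, G x θ ∂μ := by
      rw [hW_int x, hGdef, integral_div]
    rw [h1]
    rw [← integral_add ((hGint x).indicator measurableSet_Iic)
      ((hGint x).indicator measurableSet_Ioi)]
    congr 1
    ext θ
    have := Set.indicator_self_add_compl (Set.Iic (x / (2 * x₀))) (G x)
    rw [Set.compl_Iic] at this
    exact (congrFun this θ).symm
  -- bound on the tail part
  set C : ℝ := M * (2 * x₀) ^ (α + ε) / c with hCdef
  have hI₂le : ∀ x : ℝ, max x₁ 1 ≤ x →
      (∫ θ, (Set.Ioi (x / (2 * x₀))).indicator (G x) θ ∂μ) ≤ C * x ^ (-(ε/2)) := by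
    intro x hx
    have hx1 : x₁ ≤ x := le_trans (le_max_left _ _) hx
    have hx0 : (0:ℝ) < x := lt_of_lt_of_le (lt_of_lt_of_le one_pos (le_max_right _ _)) hx
    set a : ℝ := x / (2 * x₀) with hadef
    have ha0 : 0 < a := by positivity
    have step1 : (∫ θ, (Set.Ioi a).indicator (G x) θ ∂μ) ≤
        (∫ θ, (Set.Ioi a).indicator (fun _ => 1 / V x) θ ∂μ) := by
      refine integral_mono ((hGint x).indicator measurableSet_Ioi)
        ((integrable_const _).indicator measurableSet_Ioi) ?_
      intro θ
      exact Set.indicator_le_indicator (hGle x θ)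
    have step2 : (∫ θ, (Set.Ioi a).indicator (fun _ => 1 / V x) θ ∂μ) =
        (μ (Set.Ioi a)).toReal * (1 / V x) := by
      rw [integral_indicator_const _ measurableSet_Ioi, smul_eq_mul, Measure.real_def]
    have step3 : (μ (Set.Ioi a)).toReal ≤ M / a ^ (α + ε) := hMark a ha0
    have hVlow : c * x ^ (-β) ≤ V x := lower x hx1
    have hVxlow : 1 / V x ≤ x ^ β / c := by
      rw [div_le_div_iff₀ (hVpos x) hc0, one_mul]
      calc c = c * x ^ (-β) * x ^ β := by
            rw [mul_assoc, ← Real.rpow_add hx0, neg_add_cancel, Real.rpow_zero, mul_one]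
      _ ≤ V x * x ^ β := mul_le_mul_of_nonneg_right hVlow (Real.rpow_nonneg hx0.le _)
      _ = x ^ β * V x := mul_comm _ _
    have hrw : M / a ^ (α + ε) = M * (2 * x₀) ^ (α + ε) * x ^ (-(α + ε)) := by
      rw [hadef, Real.div_rpow hx0.le (by positivity), Real.rpow_neg hx0.le]
      field_simp
    calc (∫ θ, (Set.Ioi a).indicator (G x) θ ∂μ)
        ≤ (μ (Set.Ioi a)).toReal * (1 / V x) := by rw [← step2]; exact step1
    _ ≤ (M / a ^ (α + ε)) * (x ^ β / c) := by
        apply mul_le_mul step3 hVxlow (by positivity) (by positivity)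
    _ = C * (x ^ β * x ^ (-(α + ε))) := by rw [hrw, hCdef]; ring
    _ = C * x ^ (-(ε/2)) := by
        rw [← Real.rpow_add hx0]
        congr 1
        rw [hβdef]
        ring_nf
  have hI₂nn : ∀ x : ℝ, 0 ≤ ∫ θ, (Set.Ioi (x / (2 * x₀))).indicator (G x) θ ∂μ := by
    intro x
    refine integral_nonneg fun θ => ?_
    exact Set.indicator_nonneg (fun θ _ => hGnn x θ) θ
  have hI₂lim : Tendsto (fun x => ∫ θ, (Set.Ioi (x / (2 * x₀))).indicator (G x) θ ∂μ)
      atTop (𝓝 0) := by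
    refine squeeze_zero' (Eventually.of_forall hI₂nn)
      (eventually_atTop.mpr ⟨max x₁ 1, hI₂le⟩) ?_
    have := (tendsto_rpow_neg_atTop (by linarith : 0 < ε/2)).const_mul C
    simpa using this
  -- dominated convergence for the main part
  have hI₁lim : Tendsto (fun x => ∫ θ, (Set.Iic (x / (2 * x₀))).indicator (G x) θ ∂μ)
      atTop (𝓝 (∫ θ, θ ^ α ∂μ)) := by
    refine tendsto_integral_filter_of_dominated_convergence
      (fun θ => K * (1 + θ ^ β)) ?_ ?_ ?_ ?_
    · refine Eventually.of_forall fun x => ?_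
      exact ((hGmeas x).indicator measurableSet_Iic).aestronglyMeasurable
    · filter_upwards [eventually_ge_atTop (1:ℝ)] with x hx1
      filter_upwards [hμ0] with θ hθ
      have hx0 : (0:ℝ) < x := lt_of_lt_of_le one_pos hx1
      by_cases hmem : θ ∈ Set.Iic (x / (2 * x₀))
      · rw [Set.indicator_of_mem hmem, Real.norm_eq_abs, abs_of_nonneg (hGnn x θ)]
        rcases eq_or_lt_of_le hθ with heq | hθ0
        · rw [hGdef]
          simp only
          rw [← heq, hF0 x hx0, zero_div]
          positivity
        · rcases le_or_gt θ 1 with hθ1 | hθ1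
          · have hle : G x θ ≤ 1 := by
              rw [hGdef]
              simp only
              rw [hFV x θ hθ0, div_le_one (hVpos x)]
              refine hVanti ?_
              rw [le_div_iff₀ hθ0]
              nlinarith
            have h1 : 0 ≤ θ ^ β := Real.rpow_nonneg hθ _
            nlinarith
          · have hpot : V (x / θ) ≤ K * θ ^ β * V x := by
              refine potter θ hθ1.le x ?_
              have := (Set.mem_Iic.mp hmem)
              rw [le_div_iff₀ (by positivity)] at this
              nlinarith
            have hle : G x θ ≤ K * θ ^ β := by
              rw [hGdef]
              simp only
              rw [hFV x θ hθ0, div_le_iff₀ (hVpos x)]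
              exact hpot
            have h1 : 0 ≤ θ ^ β := Real.rpow_nonneg hθ _
            nlinarith
      · rw [Set.indicator_of_notMem hmem]
        have h1 : 0 ≤ θ ^ β := Real.rpow_nonneg hθ _
        rw [norm_zero]
        nlinarith
    · exact ((integrable_const (1:ℝ)).add (hdomInt β hβpos hβle)).const_mul K
    · filter_upwards [hμ0] with θ hθ
      rcases eq_or_lt_of_le hθ with heq | hθ0
      · have : θ ^ α = 0 := by rw [← heq, Real.zero_rpow hα.ne']
        rw [this]
        refine Tendsto.congr' ?_ tendsto_const_nhds
        filter_upwards [eventually_ge_atTop (1:ℝ)] with x hx1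
        have hx0 : (0:ℝ) < x := lt_of_lt_of_le one_pos hx1
        have hmem : θ ∈ Set.Iic (x / (2 * x₀)) := by
          rw [Set.mem_Iic, ← heq]
          positivity
        rw [Set.indicator_of_mem hmem, hGdef]
        simp only
        rw [← heq, hF0 x hx0, zero_div]
      · have hlim2 := hRV' θ⁻¹ (inv_pos.mpr hθ0)
        have hval : (θ⁻¹) ^ (-α) = θ ^ α := by
          rw [Real.inv_rpow hθ0.le, ← Real.rpow_neg hθ0.le, neg_neg]
        rw [hval] at hlim2
        refine Tendsto.congr' ?_ hlim2
        filter_upwards [eventually_ge_atTop (max 1 (2 * θ * x₀))] with x hx1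
        have hx0 : (0:ℝ) < x := lt_of_lt_of_le one_pos (le_trans (le_max_left _ _) hx1)
        have hmem : θ ∈ Set.Iic (x / (2 * x₀)) := by
          rw [Set.mem_Iic, le_div_iff₀ (by positivity)]
          have := le_trans (le_max_right _ _) hx1
          nlinarith
        rw [Set.indicator_of_mem hmem, hGdef]
        simp only
        rw [hFV x θ hθ0, div_eq_inv_mul x θ]
  -- the key convergence
  have hWV : Tendsto (fun x => W x / V x) atTop (𝓝 m) := by
    have h := hI₁lim.add hI₂lim
    rw [add_zero, ← hm_eq] at h
    exact h.congr fun x => (hsplit x).symm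
  have h1' : Tendsto (fun x => W x / (m * V x)) atTop (𝓝 1) := by
    have h := hWV.div_const m
    rw [div_self hm_pos.ne'] at h
    refine h.congr fun x => ?_
    rw [div_div, mul_comm]
  have hWpos : ∀ᶠ x in atTop, 0 < W x := by
    filter_upwards [hWV.eventually_const_lt hm_pos] with x hx
    have h := mul_pos hx (hVpos x)
    rwa [div_mul_cancel₀ _ (hVpos x).ne'] at h
  constructor
  · exact h1'
  · intro t ht
    have hcomp : Tendsto (fun x : ℝ => t * x) atTop atTop :=
      Tendsto.const_mul_atTop ht tendsto_id
    have hA2 : Tendsto (fun x => W (t * x) / (m * V (t * x))) atTop (𝓝 1) := h1'.comp hcomp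
    have hB2 : Tendsto (fun x => (m * V x) / W x) atTop (𝓝 1) := by
      have h := h1'.inv₀ one_ne_zero
      rw [inv_one] at h
      refine h.congr fun x => ?_
      rw [inv_div]
    have hC2 := hRV' t ht
    have hmain := (hA2.mul hC2).mul hB2
    rw [one_mul, mul_one] at hmain
    have hfinal : Tendsto (fun x => W (t * x) / W x) atTop (𝓝 (t ^ (-α))) := by
      refine Tendsto.congr' ?_ hmain
      filter_upwards [hWpos] with x hWx
      field_simp [hm_pos.ne', (hVpos x).ne', (hVpos (t * x)).ne', hWx.ne']
    exact hfinal
end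

section
/- Invariance of GTAI under bounded random scaling: if X_1,…,X_n, Y_1,…,Y_m are GTAI and Θ_1,…,Θ_n, Δ_1,…,Δ_m are nonnegative, nondegenerate-at-zero random variables bounded above (P(Θ_i ≤ b_i)=1, P(Δ_j ≤ d_j)=1 for some b_i,d_j > 0), independent of the X's and Y's, then the products Θ_1X_1,…,Θ_nX_n, Δ_1Y_1,…,Δ_mY_m are also GTAI. -/
open MeasureTheory ProbabilityTheory Filter Topology

/-- Generalized tail asymptotic independence (GTAI) for two finite families. -/
def GTAI {Ω : Type*} [MeasurableSpace Ω] (P : Measure Ω)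
    {n m : ℕ} (X : Fin n → Ω → ℝ) (Y : Fin m → Ω → ℝ) : Prop :=
  (∀ i k : Fin n, i ≠ k → ∀ j : Fin m,
    Tendsto (fun p : ℝ × ℝ × ℝ =>
      (P ({ω | |X i ω| > p.1} ∩ {ω | X k ω > p.2.1} ∩ {ω | Y j ω > p.2.2})).toReal /
      (P ({ω | X k ω > p.2.1} ∩ {ω | Y j ω > p.2.2})).toReal)
      (atTop ×ˢ atTop ×ˢ atTop) (𝓝 0)) ∧
  (∀ j k : Fin m, j ≠ k → ∀ i : Fin n,
    Tendsto (fun p : ℝ × ℝ × ℝ =>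
      (P ({ω | |Y j ω| > p.2.1} ∩ {ω | X i ω > p.1} ∩ {ω | Y k ω > p.2.2})).toReal /
      (P ({ω | X i ω > p.1} ∩ {ω | Y k ω > p.2.2})).toReal)
      (atTop ×ˢ atTop ×ˢ atTop) (𝓝 0))


lemma gtai_uniform_bound {F : Type*} [MeasurableSpace F] (ν : Measure F) [IsFiniteMeasure ν]
    (f g h : F → ℝ)
    (htend : Tendsto (fun p : ℝ × ℝ × ℝ =>
      (ν ({z | |f z| > p.1} ∩ {z | g z > p.2.1} ∩ {z | h z > p.2.2})).toReal /
      (ν ({z | g z > p.2.1} ∩ {z | h z > p.2.2})).toReal)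
      (atTop ×ˢ atTop ×ˢ atTop) (𝓝 0)) {ε : ℝ} (hε : 0 < ε) :
    ∃ M : ℝ, 1 ≤ M ∧ ∀ x1 x2 y : ℝ, M ≤ x1 → M ≤ x2 → M ≤ y →
      ν ({z | |f z| > x1} ∩ {z | g z > x2} ∩ {z | h z > y}) ≤
        ENNReal.ofReal ε * ν ({z | g z > x2} ∩ {z | h z > y}) := by
  have hev := htend.eventually (gt_mem_nhds hε)
  rw [prod_atTop_atTop_eq, prod_atTop_atTop_eq, eventually_atTop] at hev
  obtain ⟨p0, hp0⟩ := hev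
  refine ⟨max 1 (max p0.1 (max p0.2.1 p0.2.2)), le_max_left _ _, fun x1 x2 y hx1 hx2 hy => ?_⟩
  have hle : p0 ≤ (x1, x2, y) := by
    refine ⟨le_trans (le_trans (le_max_left _ _) (le_max_right _ _)) hx1, ?_, ?_⟩ <;>
      simp only []
    · exact le_trans (le_trans (le_max_left _ _) (le_trans (le_max_right _ _) (le_max_right _ _))) hx2
    · exact le_trans (le_trans (le_max_right _ _) (le_trans (le_max_right _ _) (le_max_right _ _))) hy
  have hrat := hp0 _ hle
  simp only at hrat
  set N := ν ({z | |f z| > x1} ∩ {z | g z > x2} ∩ {z | h z > y}) with hN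
  set D := ν ({z | g z > x2} ∩ {z | h z > y}) with hD
  have hND : N ≤ D := measure_mono (fun z hz => ⟨hz.1.2, hz.2⟩)
  rcases eq_or_ne D 0 with h0 | h0
  · have : N = 0 := le_antisymm (h0 ▸ hND) zero_le
    simp [this]
  · have hDfin : D ≠ ⊤ := measure_ne_top ν _
    have hDpos : 0 < D.toReal := ENNReal.toReal_pos h0 hDfin
    have hNlt : N.toReal ≤ ε * D.toReal := le_of_lt ((div_lt_iff₀ hDpos).mp hrat)
    calc N = ENNReal.ofReal N.toReal := (ENNReal.ofReal_toReal (measure_ne_top ν _)).symm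
      _ ≤ ENNReal.ofReal (ε * D.toReal) := ENNReal.ofReal_le_ofReal hNlt
      _ = ENNReal.ofReal ε * ENNReal.ofReal D.toReal := ENNReal.ofReal_mul hε.le
      _ = ENNReal.ofReal ε * D := by rw [ENNReal.ofReal_toReal hDfin]

lemma gtai_slice_bound {F : Type*} [MeasurableSpace F] (ν : Measure F) (f g h : F → ℝ)
    {ba bb bc : ℝ} (hba : 0 < ba) (hbb : 0 < bb) (hbc : 0 < bc)
    {ε M : ℝ} (hM1 : 1 ≤ M)
    (hM : ∀ x1 x2 y : ℝ, M ≤ x1 → M ≤ x2 → M ≤ y →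
      ν ({z | |f z| > x1} ∩ {z | g z > x2} ∩ {z | h z > y}) ≤
        ENNReal.ofReal ε * ν ({z | g z > x2} ∩ {z | h z > y}))
    {aw bw cw : ℝ}
    (haw : 0 ≤ aw) (haw2 : aw ≤ ba) (hbw : 0 ≤ bw) (hbw2 : bw ≤ bb)
    (hcw : 0 ≤ cw) (hcw2 : cw ≤ bc)
    {x1 x2 y : ℝ} (hx1 : ba * M ≤ x1) (hx2 : bb * M ≤ x2) (hy : bc * M ≤ y) :
    ν ({z | |aw * f z| > x1} ∩ {z | bw * g z > x2} ∩ {z | cw * h z > y}) ≤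
      ENNReal.ofReal ε * ν ({z | bw * g z > x2} ∩ {z | cw * h z > y}) := by
  have hMpos : 0 < M := lt_of_lt_of_le one_pos hM1
  have hx2pos : 0 < x2 := lt_of_lt_of_le (by positivity) hx2
  have hypos : 0 < y := lt_of_lt_of_le (by positivity) hy
  rcases eq_or_lt_of_le hbw with hbw0 | hbwpos
  · have he : {z | bw * g z > x2} = (∅ : Set F) := by
      ext z; simp [← hbw0, hx2pos.not_gt]
    simp [he]
  rcases eq_or_lt_of_le hcw with hcw0 | hcwpos
  · have he : {z | cw * h z > y} = (∅ : Set F) := by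
      ext z; simp [← hcw0, hypos.not_gt]
    simp [he]
  have hsg : {z | bw * g z > x2} = {z | g z > x2 / bw} := by
    ext z
    simp only [Set.mem_setOf_eq, gt_iff_lt, div_lt_iff₀ hbwpos]
    rw [mul_comm]
  have hsh : {z | cw * h z > y} = {z | h z > y / cw} := by
    ext z
    simp only [Set.mem_setOf_eq, gt_iff_lt, div_lt_iff₀ hcwpos]
    rw [mul_comm]
  rw [hsg, hsh]
  have hsub : {z | |aw * f z| > x1} ⊆ {z | |f z| > x1 / ba} := by
    intro z hz
    simp only [Set.mem_setOf_eq, gt_iff_lt] at hz ⊢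
    rw [div_lt_iff₀ hba]
    calc x1 < |aw * f z| := hz
      _ = aw * |f z| := by rw [abs_mul, abs_of_nonneg haw]
      _ ≤ ba * |f z| := by
          apply mul_le_mul_of_nonneg_right haw2 (abs_nonneg _)
      _ = |f z| * ba := mul_comm _ _
  refine le_trans (measure_mono ?_) (hM (x1 / ba) (x2 / bw) (y / cw) ?_ ?_ ?_)
  · intro z hz
    exact ⟨⟨hsub hz.1.1, hz.1.2⟩, hz.2⟩
  · rw [le_div_iff₀ hba]; linarith [hx1, mul_comm ba M]
  · calc M = bb * M / bb := by field_simp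
      _ ≤ x2 / bb := by gcongr
      _ ≤ x2 / bw := by gcongr
  · calc M = bc * M / bc := by field_simp
      _ ≤ y / bc := by gcongr
      _ ≤ y / cw := by gcongr

lemma gtai_prod_tendsto {E F : Type*} [MeasurableSpace E] [MeasurableSpace F]
    (μ : Measure E) (ν : Measure F) [IsProbabilityMeasure μ] [IsProbabilityMeasure ν]
    (a b c : E → ℝ) (f g h : F → ℝ)
    (ha : Measurable a) (hb : Measurable b) (hc : Measurable c)
    (hf : Measurable f) (hg : Measurable g) (hh : Measurable h)
    {ba bb bc : ℝ} (hba : 0 < ba) (hbb : 0 < bb) (hbc : 0 < bc)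
    (haa : ∀ᵐ w ∂μ, 0 ≤ a w ∧ a w ≤ ba)
    (hab : ∀ᵐ w ∂μ, 0 ≤ b w ∧ b w ≤ bb)
    (hac : ∀ᵐ w ∂μ, 0 ≤ c w ∧ c w ≤ bc)
    (htend : Tendsto (fun p : ℝ × ℝ × ℝ =>
      (ν ({z | |f z| > p.1} ∩ {z | g z > p.2.1} ∩ {z | h z > p.2.2})).toReal /
      (ν ({z | g z > p.2.1} ∩ {z | h z > p.2.2})).toReal)
      (atTop ×ˢ atTop ×ˢ atTop) (𝓝 0)) :
    Tendsto (fun p : ℝ × ℝ × ℝ =>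
      ((μ.prod ν) ({q | |a q.1 * f q.2| > p.1} ∩ {q | b q.1 * g q.2 > p.2.1} ∩
          {q | c q.1 * h q.2 > p.2.2})).toReal /
      ((μ.prod ν) ({q | b q.1 * g q.2 > p.2.1} ∩ {q | c q.1 * h q.2 > p.2.2})).toReal)
      (atTop ×ˢ atTop ×ˢ atTop) (𝓝 0) := by
  rw [Metric.tendsto_nhds]
  intro ε hε
  obtain ⟨M, hM1, hM⟩ := gtai_uniform_bound ν f g h htend (half_pos hε)
  have hev : ∀ᶠ p : ℝ × ℝ × ℝ in atTop ×ˢ atTop ×ˢ atTop,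
      ba * M ≤ p.1 ∧ bb * M ≤ p.2.1 ∧ bc * M ≤ p.2.2 :=
    (eventually_ge_atTop _).prod_mk ((eventually_ge_atTop _).prod_mk (eventually_ge_atTop _))
  filter_upwards [hev] with p hp
  have hmS : MeasurableSet ({q : E × F | |a q.1 * f q.2| > p.1} ∩
      {q | b q.1 * g q.2 > p.2.1} ∩ {q | c q.1 * h q.2 > p.2.2}) := by
    refine MeasurableSet.inter (MeasurableSet.inter ?_ ?_) ?_
    · exact measurableSet_lt measurable_const ((ha.comp measurable_fst).mul (hf.comp measurable_snd)).abs
    · exact measurableSet_lt measurable_const ((hb.comp measurable_fst).mul (hg.comp measurable_snd))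
    · exact measurableSet_lt measurable_const ((hc.comp measurable_fst).mul (hh.comp measurable_snd))
  have hmT : MeasurableSet ({q : E × F | b q.1 * g q.2 > p.2.1} ∩
      {q | c q.1 * h q.2 > p.2.2}) := by
    refine MeasurableSet.inter ?_ ?_
    · exact measurableSet_lt measurable_const ((hb.comp measurable_fst).mul (hg.comp measurable_snd))
    · exact measurableSet_lt measurable_const ((hc.comp measurable_fst).mul (hh.comp measurable_snd))
  set N := (μ.prod ν) ({q : E × F | |a q.1 * f q.2| > p.1} ∩
      {q | b q.1 * g q.2 > p.2.1} ∩ {q | c q.1 * h q.2 > p.2.2}) with hNdef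
  set D := (μ.prod ν) ({q : E × F | b q.1 * g q.2 > p.2.1} ∩
      {q | c q.1 * h q.2 > p.2.2}) with hDdef
  have key : N ≤ ENNReal.ofReal (ε / 2) * D := by
    rw [hNdef, hDdef, Measure.prod_apply hmS, Measure.prod_apply hmT,
      ← lintegral_const_mul' _ _ ENNReal.ofReal_ne_top]
    refine lintegral_mono_ae ?_
    filter_upwards [haa, hab, hac] with w hw1 hw2 hw3
    have := gtai_slice_bound ν f g h hba hbb hbc hM1 hM hw1.1 hw1.2 hw2.1 hw2.2 hw3.1 hw3.2
      hp.1 hp.2.1 hp.2.2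
    simpa [Set.preimage_inter, Set.preimage_setOf_eq] using this
  have hND : N ≤ D := measure_mono (fun q hq => ⟨hq.1.2, hq.2⟩)
  rw [Real.dist_0_eq_abs, abs_of_nonneg (div_nonneg ENNReal.toReal_nonneg ENNReal.toReal_nonneg)]
  have hfin : D ≠ ⊤ := measure_ne_top _ _
  have hratle : N.toReal / D.toReal ≤ ε / 2 := by
    rcases eq_or_ne D 0 with h0 | h0
    · have : N = 0 := le_antisymm (h0 ▸ hND) zero_le
      simp [this, le_of_lt (half_pos hε)]
    · have hDpos : 0 < D.toReal := ENNReal.toReal_pos h0 hfin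
      rw [div_le_iff₀ hDpos]
      have h1 : N.toReal ≤ (ENNReal.ofReal (ε / 2) * D).toReal :=
        ENNReal.toReal_mono (ENNReal.mul_ne_top ENNReal.ofReal_ne_top hfin) key
      rwa [ENNReal.toReal_mul, ENNReal.toReal_ofReal (le_of_lt (half_pos hε))] at h1
  exact lt_of_le_of_lt hratle (half_lt_self hε)

/-- Invariance of GTAI under bounded random scaling: if `X`'s and `Y`'s are GTAI
and the weights `Θ`, `Δ` are nonnegative, nondegenerate at zero, bounded above
and independent of the primary variables, then the products
`Θ_i X_i`, `Δ_j Y_j` are also GTAI. -/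
theorem gtai_invariant_under_bounded_scaling
    {Ω : Type*} [MeasurableSpace Ω] (P : Measure Ω) [IsProbabilityMeasure P]
    {n m : ℕ} (X : Fin n → Ω → ℝ) (Y : Fin m → Ω → ℝ)
    (Θ : Fin n → Ω → ℝ) (Δ : Fin m → Ω → ℝ)
    (hXmeas : ∀ i, Measurable (X i)) (hYmeas : ∀ j, Measurable (Y j))
    (hΘmeas : ∀ i, Measurable (Θ i)) (hΔmeas : ∀ j, Measurable (Δ j))
    (hGTAI : GTAI P X Y)
    (hΘnonneg : ∀ i, ∀ᵐ ω ∂P, 0 ≤ Θ i ω) (hΔnonneg : ∀ j, ∀ᵐ ω ∂P, 0 ≤ Δ j ω)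
    (hΘnondeg : ∀ i, 0 < P {ω | Θ i ω > 0}) (hΔnondeg : ∀ j, 0 < P {ω | Δ j ω > 0})
    (hΘbdd : ∀ i, ∃ b : ℝ, 0 < b ∧ ∀ᵐ ω ∂P, Θ i ω ≤ b)
    (hΔbdd : ∀ j, ∃ d : ℝ, 0 < d ∧ ∀ᵐ ω ∂P, Δ j ω ≤ d)
    (hindep : IndepFun (fun ω => ((fun i => Θ i ω, fun j => Δ j ω) :
        (Fin n → ℝ) × (Fin m → ℝ)))
      (fun ω => ((fun i => X i ω, fun j => Y j ω) : (Fin n → ℝ) × (Fin m → ℝ))) P) :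
    GTAI P (fun i ω => Θ i ω * X i ω) (fun j ω => Δ j ω * Y j ω) := by
    classical
  set W : Ω → (Fin n → ℝ) × (Fin m → ℝ) :=
    fun ω => (fun i => Θ i ω, fun j => Δ j ω) with hWdef
  set Z : Ω → (Fin n → ℝ) × (Fin m → ℝ) :=
    fun ω => (fun i => X i ω, fun j => Y j ω) with hZdef
  have hWm : Measurable W :=
    Measurable.prodMk (measurable_pi_lambda _ fun i => hΘmeas i)
      (measurable_pi_lambda _ fun j => hΔmeas j)
  have hZm : Measurable Z :=
    Measurable.prodMk (measurable_pi_lambda _ fun i => hXmeas i)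
      (measurable_pi_lambda _ fun j => hYmeas j)
  have hmap : P.map (fun ω => (W ω, Z ω)) = (P.map W).prod (P.map Z) :=
    (indepFun_iff_map_prod_eq_prod_map_map hWm.aemeasurable hZm.aemeasurable).mp hindep
  haveI : IsProbabilityMeasure (P.map W) := Measure.isProbabilityMeasure_map hWm.aemeasurable
  haveI : IsProbabilityMeasure (P.map Z) := Measure.isProbabilityMeasure_map hZm.aemeasurable
  -- coordinate measurability helpers
  have mX : ∀ i : Fin n, Measurable fun z : (Fin n → ℝ) × (Fin m → ℝ) => z.1 i :=
    fun i => (measurable_pi_apply i).comp measurable_fst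
  have mY : ∀ j : Fin m, Measurable fun z : (Fin n → ℝ) × (Fin m → ℝ) => z.2 j :=
    fun j => (measurable_pi_apply j).comp measurable_snd
  -- transferred ae bounds for the weights
  have hμΘ : ∀ i : Fin n, ∃ b : ℝ, 0 < b ∧
      ∀ᵐ w ∂(P.map W), 0 ≤ w.1 i ∧ w.1 i ≤ b := by
    intro i
    obtain ⟨b, hbpos, hble⟩ := hΘbdd i
    refine ⟨b, hbpos, ?_⟩
    have hs : MeasurableSet {w : (Fin n → ℝ) × (Fin m → ℝ) | 0 ≤ w.1 i ∧ w.1 i ≤ b} :=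
      (measurableSet_le measurable_const (mX i)).inter (measurableSet_le (mX i) measurable_const)
    rw [ae_map_iff hWm.aemeasurable hs]
    filter_upwards [hΘnonneg i, hble] with ω h1 h2
    exact ⟨h1, h2⟩
  have hμΔ : ∀ j : Fin m, ∃ d : ℝ, 0 < d ∧
      ∀ᵐ w ∂(P.map W), 0 ≤ w.2 j ∧ w.2 j ≤ d := by
    intro j
    obtain ⟨d, hdpos, hdle⟩ := hΔbdd j
    refine ⟨d, hdpos, ?_⟩
    have hs : MeasurableSet {w : (Fin n → ℝ) × (Fin m → ℝ) | 0 ≤ w.2 j ∧ w.2 j ≤ d} :=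
      (measurableSet_le measurable_const (mY j)).inter (measurableSet_le (mY j) measurable_const)
    rw [ae_map_iff hWm.aemeasurable hs]
    filter_upwards [hΔnonneg j, hdle] with ω h1 h2
    exact ⟨h1, h2⟩
  -- transfer of measures
  have hPZ : ∀ s : Set ((Fin n → ℝ) × (Fin m → ℝ)), MeasurableSet s →
      (P.map Z) s = P (Z ⁻¹' s) := fun s hs => Measure.map_apply hZm hs
  have hPpair : ∀ S : Set (((Fin n → ℝ) × (Fin m → ℝ)) × ((Fin n → ℝ) × (Fin m → ℝ))),
      MeasurableSet S →
      ((P.map W).prod (P.map Z)) S = P ((fun ω => (W ω, Z ω)) ⁻¹' S) := by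
    intro S hS
    rw [← hmap, Measure.map_apply (hWm.prodMk hZm) hS]
  have hσ : Tendsto (fun p : ℝ × ℝ × ℝ => (p.2.1, p.1, p.2.2))
      ((atTop : Filter ℝ) ×ˢ (atTop : Filter ℝ) ×ˢ (atTop : Filter ℝ))
      (atTop ×ˢ atTop ×ˢ atTop) :=
    (tendsto_fst.comp tendsto_snd).prodMk
      (tendsto_fst.prodMk (tendsto_snd.comp tendsto_snd))
  constructor
  · intro i k hik j
    obtain ⟨bi, hbi, haei⟩ := hμΘ i
    obtain ⟨bk, hbk, haek⟩ := hμΘ k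
    obtain ⟨dj, hdj, haej⟩ := hμΔ j
    -- transfer GTAI hypothesis to ν = P.map Z
    have htν : Tendsto (fun p : ℝ × ℝ × ℝ =>
        ((P.map Z) ({z | |z.1 i| > p.1} ∩ {z | z.1 k > p.2.1} ∩ {z | z.2 j > p.2.2})).toReal /
        ((P.map Z) ({z | z.1 k > p.2.1} ∩ {z | z.2 j > p.2.2})).toReal)
        (atTop ×ˢ atTop ×ˢ atTop) (𝓝 0) := by
      have heq : (fun p : ℝ × ℝ × ℝ =>
          ((P.map Z) ({z | |z.1 i| > p.1} ∩ {z | z.1 k > p.2.1} ∩ {z | z.2 j > p.2.2})).toReal /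
          ((P.map Z) ({z | z.1 k > p.2.1} ∩ {z | z.2 j > p.2.2})).toReal) =
          (fun p : ℝ × ℝ × ℝ =>
          (P ({ω | |X i ω| > p.1} ∩ {ω | X k ω > p.2.1} ∩ {ω | Y j ω > p.2.2})).toReal /
          (P ({ω | X k ω > p.2.1} ∩ {ω | Y j ω > p.2.2})).toReal) := by
        funext p
        have hs1 : MeasurableSet ({z : (Fin n → ℝ) × (Fin m → ℝ) | |z.1 i| > p.1} ∩
            {z | z.1 k > p.2.1} ∩ {z | z.2 j > p.2.2}) :=
          ((measurableSet_lt measurable_const (mX i).abs).inter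
            (measurableSet_lt measurable_const (mX k))).inter
            (measurableSet_lt measurable_const (mY j))
        have hs2 : MeasurableSet ({z : (Fin n → ℝ) × (Fin m → ℝ) | z.1 k > p.2.1} ∩
            {z | z.2 j > p.2.2}) :=
          (measurableSet_lt measurable_const (mX k)).inter
            (measurableSet_lt measurable_const (mY j))
        rw [hPZ _ hs1, hPZ _ hs2]
        rfl
      rw [heq]
      exact hGTAI.1 i k hik j
    have hprod := gtai_prod_tendsto (P.map W) (P.map Z)
      (fun w => w.1 i) (fun w => w.1 k) (fun w => w.2 j)
      (fun z => z.1 i) (fun z => z.1 k) (fun z => z.2 j)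
      (mX i) (mX k) (mY j) (mX i) (mX k) (mY j)
      hbi hbk hdj haei haek haej htν
    have hgoal : (fun p : ℝ × ℝ × ℝ =>
        (P ({ω | |Θ i ω * X i ω| > p.1} ∩ {ω | Θ k ω * X k ω > p.2.1} ∩
          {ω | Δ j ω * Y j ω > p.2.2})).toReal /
        (P ({ω | Θ k ω * X k ω > p.2.1} ∩ {ω | Δ j ω * Y j ω > p.2.2})).toReal) =
        (fun p : ℝ × ℝ × ℝ =>
        (((P.map W).prod (P.map Z)) ({q | |q.1.1 i * q.2.1 i| > p.1} ∩
          {q | q.1.1 k * q.2.1 k > p.2.1} ∩ {q | q.1.2 j * q.2.2 j > p.2.2})).toReal /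
        (((P.map W).prod (P.map Z)) ({q | q.1.1 k * q.2.1 k > p.2.1} ∩
          {q | q.1.2 j * q.2.2 j > p.2.2})).toReal) := by
      funext p
      have hS : MeasurableSet ({q : ((Fin n → ℝ) × (Fin m → ℝ)) × ((Fin n → ℝ) × (Fin m → ℝ)) |
          |q.1.1 i * q.2.1 i| > p.1} ∩ {q | q.1.1 k * q.2.1 k > p.2.1} ∩
          {q | q.1.2 j * q.2.2 j > p.2.2}) :=
        ((measurableSet_lt measurable_const
            (((mX i).comp measurable_fst).mul ((mX i).comp measurable_snd)).abs).inter
          (measurableSet_lt measurable_const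
            (((mX k).comp measurable_fst).mul ((mX k).comp measurable_snd)))).inter
          (measurableSet_lt measurable_const
            (((mY j).comp measurable_fst).mul ((mY j).comp measurable_snd)))
      have hT : MeasurableSet ({q : ((Fin n → ℝ) × (Fin m → ℝ)) × ((Fin n → ℝ) × (Fin m → ℝ)) |
          q.1.1 k * q.2.1 k > p.2.1} ∩ {q | q.1.2 j * q.2.2 j > p.2.2}) :=
        (measurableSet_lt measurable_const
            (((mX k).comp measurable_fst).mul ((mX k).comp measurable_snd))).inter
          (measurableSet_lt measurable_const
            (((mY j).comp measurable_fst).mul ((mY j).comp measurable_snd)))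
      rw [hPpair _ hS, hPpair _ hT]
      rfl
    rw [hgoal]
    exact hprod
  · intro j k hjk i
    obtain ⟨dj, hdj, haej⟩ := hμΔ j
    obtain ⟨bi, hbi, haei⟩ := hμΘ i
    obtain ⟨dk, hdk, haek⟩ := hμΔ k
    have htν : Tendsto (fun p : ℝ × ℝ × ℝ =>
        ((P.map Z) ({z | |z.2 j| > p.1} ∩ {z | z.1 i > p.2.1} ∩ {z | z.2 k > p.2.2})).toReal /
        ((P.map Z) ({z | z.1 i > p.2.1} ∩ {z | z.2 k > p.2.2})).toReal)
        (atTop ×ˢ atTop ×ˢ atTop) (𝓝 0) := by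
      have heq : (fun p : ℝ × ℝ × ℝ =>
          ((P.map Z) ({z | |z.2 j| > p.1} ∩ {z | z.1 i > p.2.1} ∩ {z | z.2 k > p.2.2})).toReal /
          ((P.map Z) ({z | z.1 i > p.2.1} ∩ {z | z.2 k > p.2.2})).toReal) =
          (fun p : ℝ × ℝ × ℝ =>
          (P ({ω | |Y j ω| > p.1} ∩ {ω | X i ω > p.2.1} ∩ {ω | Y k ω > p.2.2})).toReal /
          (P ({ω | X i ω > p.2.1} ∩ {ω | Y k ω > p.2.2})).toReal) := by
        funext p
        have hs1 : MeasurableSet ({z : (Fin n → ℝ) × (Fin m → ℝ) | |z.2 j| > p.1} ∩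
            {z | z.1 i > p.2.1} ∩ {z | z.2 k > p.2.2}) :=
          ((measurableSet_lt measurable_const (mY j).abs).inter
            (measurableSet_lt measurable_const (mX i))).inter
            (measurableSet_lt measurable_const (mY k))
        have hs2 : MeasurableSet ({z : (Fin n → ℝ) × (Fin m → ℝ) | z.1 i > p.2.1} ∩
            {z | z.2 k > p.2.2}) :=
          (measurableSet_lt measurable_const (mX i)).inter
            (measurableSet_lt measurable_const (mY k))
        rw [hPZ _ hs1, hPZ _ hs2]
        rfl
      rw [heq]
      have h2 := (hGTAI.2 j k hjk i).comp hσ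
      simp only [Function.comp_def] at h2
      exact h2
    have hprod := gtai_prod_tendsto (P.map W) (P.map Z)
      (fun w => w.2 j) (fun w => w.1 i) (fun w => w.2 k)
      (fun z => z.2 j) (fun z => z.1 i) (fun z => z.2 k)
      (mY j) (mX i) (mY k) (mY j) (mX i) (mY k)
      hdj hbi hdk haej haei haek htν
    have hgoal : (fun p : ℝ × ℝ × ℝ =>
        (P ({ω | |Δ j ω * Y j ω| > p.2.1} ∩ {ω | Θ i ω * X i ω > p.1} ∩
          {ω | Δ k ω * Y k ω > p.2.2})).toReal /
        (P ({ω | Θ i ω * X i ω > p.1} ∩ {ω | Δ k ω * Y k ω > p.2.2})).toReal) =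
        (fun p : ℝ × ℝ × ℝ =>
        (((P.map W).prod (P.map Z)) ({q | |q.1.2 j * q.2.2 j| > p.2.1} ∩
          {q | q.1.1 i * q.2.1 i > p.1} ∩ {q | q.1.2 k * q.2.2 k > p.2.2})).toReal /
        (((P.map W).prod (P.map Z)) ({q | q.1.1 i * q.2.1 i > p.1} ∩
          {q | q.1.2 k * q.2.2 k > p.2.2})).toReal) := by
      funext p
      have hS : MeasurableSet ({q : ((Fin n → ℝ) × (Fin m → ℝ)) × ((Fin n → ℝ) × (Fin m → ℝ)) |
          |q.1.2 j * q.2.2 j| > p.2.1} ∩ {q | q.1.1 i * q.2.1 i > p.1} ∩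
          {q | q.1.2 k * q.2.2 k > p.2.2}) :=
        ((measurableSet_lt measurable_const
            (((mY j).comp measurable_fst).mul ((mY j).comp measurable_snd)).abs).inter
          (measurableSet_lt measurable_const
            (((mX i).comp measurable_fst).mul ((mX i).comp measurable_snd)))).inter
          (measurableSet_lt measurable_const
            (((mY k).comp measurable_fst).mul ((mY k).comp measurable_snd)))
      have hT : MeasurableSet ({q : ((Fin n → ℝ) × (Fin m → ℝ)) × ((Fin n → ℝ) × (Fin m → ℝ)) |
          q.1.1 i * q.2.1 i > p.1} ∩ {q | q.1.2 k * q.2.2 k > p.2.2}) :=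
        (measurableSet_lt measurable_const
            (((mX i).comp measurable_fst).mul ((mX i).comp measurable_snd))).inter
          (measurableSet_lt measurable_const
            (((mY k).comp measurable_fst).mul ((mY k).comp measurable_snd)))
      rw [hPpair _ hS, hPpair _ hT]
      rfl
    rw [hgoal]
    have h3 := hprod.comp hσ
    simp only [Function.comp_def] at h3
    exact h3
end

section
/- Under the GTAI and bounded-weights assumptions, for any function a(x) > 0 with a(x) → ∞ and a(x) = o(x): P(Θ_i X_i > x, Δ_j Y_j > y, Θ_k |X_k| > a(x)) = o(P(Θ_i X_i > x, Δ_j Y_j > y)) as x ∧ y → ∞, for any 1 ≤ i ≠ k ≤ n and j = 1,…,m. -/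
open MeasureTheory ProbabilityTheory Filter Topology

private lemma mul_gt_iff_gt_div {c : ℝ} (hc : 0 < c) (s t : ℝ) :
    c * t > s ↔ t > s / c := by
  rw [gt_iff_lt, gt_iff_lt, div_lt_iff₀ hc, mul_comm]

/-- Under the GTAI and bounded-weights assumptions, for any `a(x) > 0` with
`a(x) → ∞` and `a(x) = o(x)`:
`P(Θ_i X_i > x, Δ_j Y_j > y, Θ_k |X_k| > a(x)) = o(P(Θ_i X_i > x, Δ_j Y_j > y))`
as `x ∧ y → ∞`, for any `i ≠ k` and every `j`. -/
theorem gtai_negligible_third_large_value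
    {Ω : Type*} [MeasurableSpace Ω] (P : Measure Ω) [IsProbabilityMeasure P]
    {n m : ℕ} (X : Fin n → Ω → ℝ) (Y : Fin m → Ω → ℝ)
    (Θ : Fin n → Ω → ℝ) (Δ : Fin m → Ω → ℝ)
    (hXmeas : ∀ i, Measurable (X i)) (hYmeas : ∀ j, Measurable (Y j))
    (hΘmeas : ∀ i, Measurable (Θ i)) (hΔmeas : ∀ j, Measurable (Δ j))
    (hGTAI : GTAI P X Y)
    (hΘnonneg : ∀ i, ∀ᵐ ω ∂P, 0 ≤ Θ i ω) (hΔnonneg : ∀ j, ∀ᵐ ω ∂P, 0 ≤ Δ j ω)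
    (hΘnondeg : ∀ i, 0 < P {ω | Θ i ω > 0}) (hΔnondeg : ∀ j, 0 < P {ω | Δ j ω > 0})
    (hΘbdd : ∀ i, ∃ b : ℝ, 0 < b ∧ ∀ᵐ ω ∂P, Θ i ω ≤ b)
    (hΔbdd : ∀ j, ∃ d : ℝ, 0 < d ∧ ∀ᵐ ω ∂P, Δ j ω ≤ d)
    (hindep : IndepFun (fun ω => ((fun i => Θ i ω, fun j => Δ j ω) :
        (Fin n → ℝ) × (Fin m → ℝ)))
      (fun ω => ((fun i => X i ω, fun j => Y j ω) : (Fin n → ℝ) × (Fin m → ℝ))) P)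
    (a : ℝ → ℝ) (hapos : ∀ x, 0 < a x) (hatop : Tendsto a atTop atTop)
    (hao : Tendsto (fun x => a x / x) atTop (𝓝 0)) :
    ∀ i k : Fin n, i ≠ k → ∀ j : Fin m,
      Tendsto (fun q : ℝ × ℝ =>
        (P ({ω | Θ i ω * X i ω > q.1} ∩ {ω | Δ j ω * Y j ω > q.2} ∩
            {ω | Θ k ω * |X k ω| > a q.1})).toReal /
        (P ({ω | Θ i ω * X i ω > q.1} ∩ {ω | Δ j ω * Y j ω > q.2})).toReal)
        (atTop ×ˢ atTop) (𝓝 0) := by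
  intro i k hik j
  obtain ⟨bi, hbi, hbiae⟩ := hΘbdd i
  obtain ⟨bk, hbk, hbkae⟩ := hΘbdd k
  obtain ⟨dj, hdj, hdjae⟩ := hΔbdd j
  have hG := hGTAI.1 k i (Ne.symm hik) j
  -- uniform version of the GTAI convergence
  have key : ∀ ε : ℝ, 0 < ε → ∃ M : ℝ, 0 ≤ M ∧ ∀ p₁ p₂ p₃ : ℝ,
      M ≤ p₁ → M ≤ p₂ → M ≤ p₃ →
      P ({ω | |X k ω| > p₁} ∩ {ω | X i ω > p₂} ∩ {ω | Y j ω > p₃}) ≤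
        ENNReal.ofReal ε * P ({ω | X i ω > p₂} ∩ {ω | Y j ω > p₃}) := by
    intro ε hε
    have h1 : ∀ᶠ p in (atTop ×ˢ atTop ×ˢ atTop : Filter (ℝ × ℝ × ℝ)),
        (P ({ω | |X k ω| > p.1} ∩ {ω | X i ω > p.2.1} ∩ {ω | Y j ω > p.2.2})).toReal /
        (P ({ω | X i ω > p.2.1} ∩ {ω | Y j ω > p.2.2})).toReal < ε :=
      hG.eventually (gt_mem_nhds hε)
    simp only [prod_atTop_atTop_eq] at h1
    obtain ⟨p₀, hp₀⟩ := eventually_atTop.1 h1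
    refine ⟨max (max p₀.1 (max p₀.2.1 p₀.2.2)) 0, le_max_right _ _, fun p₁ p₂ p₃ h1' h2' h3' => ?_⟩
    have hle : p₀ ≤ (p₁, p₂, p₃) := by
      refine ⟨?_, ?_, ?_⟩
      · exact le_trans (le_trans (le_max_left _ _) (le_max_left _ _)) h1'
      · exact le_trans (le_trans (le_trans (le_max_left _ _) (le_max_right _ _))
          (le_max_left _ _)) h2'
      · exact le_trans (le_trans (le_trans (le_max_right _ _) (le_max_right _ _))
          (le_max_left _ _)) h3'
    have hr := hp₀ (p₁, p₂, p₃) hle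
    set A := {ω | |X k ω| > p₁} ∩ {ω | X i ω > p₂} ∩ {ω | Y j ω > p₃} with hA
    set B := {ω | X i ω > p₂} ∩ {ω | Y j ω > p₃} with hB
    have hAB : A ⊆ B := fun ω hω => ⟨hω.1.2, hω.2⟩
    rcases eq_or_ne (P B) 0 with hB0 | hB0
    · have : P A = 0 := measure_mono_null hAB hB0
      simp [this]
    · have hBfin : P B ≠ ⊤ := measure_ne_top P B
      have hBpos : 0 < (P B).toReal := ENNReal.toReal_pos hB0 hBfin
      rw [div_lt_iff₀ hBpos] at hr
      calc P A = ENNReal.ofReal (P A).toReal := (ENNReal.ofReal_toReal (measure_ne_top P A)).symm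
        _ ≤ ENNReal.ofReal (ε * (P B).toReal) := ENNReal.ofReal_le_ofReal hr.le
        _ = ENNReal.ofReal ε * P B := by
            rw [ENNReal.ofReal_mul hε.le, ENNReal.ofReal_toReal hBfin]
  -- push forward through the weight/variable decomposition
  set E := (Fin n → ℝ) × (Fin m → ℝ) with hE
  set W : Ω → E := fun ω => (fun i => Θ i ω, fun j => Δ j ω) with hWdef
  set V : Ω → E := fun ω => (fun i => X i ω, fun j => Y j ω) with hVdef
  have hW : Measurable W :=
    Measurable.prodMk (measurable_pi_lambda _ fun i => hΘmeas i)
      (measurable_pi_lambda _ fun j => hΔmeas j)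
  have hV : Measurable V :=
    Measurable.prodMk (measurable_pi_lambda _ fun i => hXmeas i)
      (measurable_pi_lambda _ fun j => hYmeas j)
  have hmap : P.map (fun ω => (W ω, V ω)) = (P.map W).prod (P.map V) :=
    (indepFun_iff_map_prod_eq_prod_map_map hW.aemeasurable hV.aemeasurable).1 hindep
  haveI hPW : IsProbabilityMeasure (P.map W) := Measure.isProbabilityMeasure_map hW.aemeasurable
  haveI hPV : IsProbabilityMeasure (P.map V) := Measure.isProbabilityMeasure_map hV.aemeasurable
  -- component measurability
  have mwi : Measurable fun w : E => w.1 i := (measurable_pi_apply i).comp measurable_fst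
  have mwk : Measurable fun w : E => w.1 k := (measurable_pi_apply k).comp measurable_fst
  have mwj : Measurable fun w : E => w.2 j := (measurable_pi_apply j).comp measurable_snd
  have m1 : Measurable fun p : E × E => p.1.1 i * p.2.1 i :=
    (((measurable_pi_apply i).comp (measurable_fst.comp measurable_fst))).mul
      ((measurable_pi_apply i).comp (measurable_fst.comp measurable_snd))
  have m2 : Measurable fun p : E × E => p.1.2 j * p.2.2 j :=
    (((measurable_pi_apply j).comp (measurable_snd.comp measurable_fst))).mul
      ((measurable_pi_apply j).comp (measurable_snd.comp measurable_snd))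
  have m3 : Measurable fun p : E × E => p.1.1 k * |p.2.1 k| :=
    (((measurable_pi_apply k).comp (measurable_fst.comp measurable_fst))).mul
      (((measurable_pi_apply k).comp (measurable_fst.comp measurable_snd)).abs)
  -- a.e. properties of the weights, transported to the pushforward measure
  have hGsetmeas : MeasurableSet {w : E | (0 ≤ w.1 i ∧ w.1 i ≤ bi) ∧
      (0 ≤ w.1 k ∧ w.1 k ≤ bk) ∧ (0 ≤ w.2 j ∧ w.2 j ≤ dj)} := by
    simp only [Set.setOf_and]
    exact (((measurableSet_le measurable_const mwi).inter
        (measurableSet_le mwi measurable_const)).inter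
      (((measurableSet_le measurable_const mwk).inter
        (measurableSet_le mwk measurable_const)).inter
      ((measurableSet_le measurable_const mwj).inter
        (measurableSet_le mwj measurable_const))))
  have hgood : ∀ᵐ w ∂(P.map W), (0 ≤ w.1 i ∧ w.1 i ≤ bi) ∧
      (0 ≤ w.1 k ∧ w.1 k ≤ bk) ∧ (0 ≤ w.2 j ∧ w.2 j ≤ dj) := by
    rw [MeasureTheory.ae_map_iff hW.aemeasurable hGsetmeas]
    filter_upwards [hΘnonneg i, hbiae, hΘnonneg k, hbkae, hΔnonneg j, hdjae]
      with ω h1 h2 h3 h4 h5 h6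
    exact ⟨⟨h1, h2⟩, ⟨h3, h4⟩, ⟨h5, h6⟩⟩
  -- main argument
  rw [NormedAddCommGroup.tendsto_nhds_zero]
  intro ε hε
  obtain ⟨M, hM0, hM⟩ := key (ε / 2) (half_pos hε)
  filter_upwards [((eventually_ge_atTop (1 : ℝ)).and
      ((eventually_ge_atTop (bi * M)).and
        (hatop.eventually (eventually_ge_atTop (bk * M))))).prod_mk
    ((eventually_ge_atTop (1 : ℝ)).and (eventually_ge_atTop (dj * M)))] with q hq
  obtain ⟨⟨h1x, h2x, h3x⟩, h1y, h2y⟩ := hq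
  obtain ⟨x, y⟩ := q
  simp only at h1x h2x h3x h1y h2y ⊢
  have hx0 : (0 : ℝ) < x := lt_of_lt_of_le one_pos h1x
  have hy0 : (0 : ℝ) < y := lt_of_lt_of_le one_pos h1y
  have hax0 : (0 : ℝ) < a x := hapos x
  set S : Set (E × E) := {p | p.1.1 i * p.2.1 i > x} ∩ {p | p.1.2 j * p.2.2 j > y} ∩
      {p | p.1.1 k * |p.2.1 k| > a x} with hS
  set S' : Set (E × E) := {p | p.1.1 i * p.2.1 i > x} ∩ {p | p.1.2 j * p.2.2 j > y} with hS'
  have hSmeas : MeasurableSet S :=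
    ((measurableSet_lt measurable_const m1).inter
      (measurableSet_lt measurable_const m2)).inter (measurableSet_lt measurable_const m3)
  have hS'meas : MeasurableSet S' :=
    (measurableSet_lt measurable_const m1).inter (measurableSet_lt measurable_const m2)
  have hpre : ({ω | Θ i ω * X i ω > x} ∩ {ω | Δ j ω * Y j ω > y} ∩
      {ω | Θ k ω * |X k ω| > a x}) = (fun ω => (W ω, V ω)) ⁻¹' S := rfl
  have hpre' : ({ω | Θ i ω * X i ω > x} ∩ {ω | Δ j ω * Y j ω > y}) =
      (fun ω => (W ω, V ω)) ⁻¹' S' := rfl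
  have e1 : P ({ω | Θ i ω * X i ω > x} ∩ {ω | Δ j ω * Y j ω > y} ∩
      {ω | Θ k ω * |X k ω| > a x}) = ∫⁻ w, (P.map V) (Prod.mk w ⁻¹' S) ∂(P.map W) := by
    rw [hpre, ← Measure.map_apply (hW.prodMk hV) hSmeas, hmap, Measure.prod_apply hSmeas]
  have e2 : P ({ω | Θ i ω * X i ω > x} ∩ {ω | Δ j ω * Y j ω > y}) =
      ∫⁻ w, (P.map V) (Prod.mk w ⁻¹' S') ∂(P.map W) := by
    rw [hpre', ← Measure.map_apply (hW.prodMk hV) hS'meas, hmap, Measure.prod_apply hS'meas]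
  -- sectionwise bound
  have hbound : ∀ᵐ w ∂(P.map W), (P.map V) (Prod.mk w ⁻¹' S) ≤
      ENNReal.ofReal (ε / 2) * (P.map V) (Prod.mk w ⁻¹' S') := by
    filter_upwards [hgood] with w hw
    obtain ⟨⟨hwi0, hwib⟩, ⟨hwk0, hwkb⟩, ⟨hwj0, hwjb⟩⟩ := hw
    rcases eq_or_lt_of_le hwi0 with hi0 | hi0
    · have hemp : Prod.mk w ⁻¹' S = ∅ := by
        rw [Set.eq_empty_iff_forall_notMem]
        rintro v ⟨⟨h1, h2⟩, h3⟩
        simp only [Set.mem_setOf_eq] at h1 h2 h3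
        rw [← hi0, zero_mul] at h1
        linarith
      rw [hemp]
      simp
    rcases eq_or_lt_of_le hwj0 with hj0 | hj0
    · have hemp : Prod.mk w ⁻¹' S = ∅ := by
        rw [Set.eq_empty_iff_forall_notMem]
        rintro v ⟨⟨h1, h2⟩, h3⟩
        simp only [Set.mem_setOf_eq] at h1 h2 h3
        rw [← hj0, zero_mul] at h2
        linarith
      rw [hemp]
      simp
    rcases eq_or_lt_of_le hwk0 with hk0 | hk0
    · have hemp : Prod.mk w ⁻¹' S = ∅ := by
        rw [Set.eq_empty_iff_forall_notMem]
        rintro v ⟨⟨h1, h2⟩, h3⟩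
        simp only [Set.mem_setOf_eq] at h1 h2 h3
        rw [← hk0, zero_mul] at h3
        linarith
      rw [hemp]
      simp
    -- all three weights positive
    have e3 : (P.map V) (Prod.mk w ⁻¹' S) =
        P ({ω | |X k ω| > a x / w.1 k} ∩ {ω | X i ω > x / w.1 i} ∩
          {ω | Y j ω > y / w.2 j}) := by
      rw [Measure.map_apply hV (hSmeas.preimage measurable_prodMk_left)]
      congr 1
      ext ω
      simp only [hS, hS', Set.mem_preimage, Set.mem_inter_iff, Set.mem_setOf_eq,
        mul_gt_iff_gt_div hi0, mul_gt_iff_gt_div hj0, mul_gt_iff_gt_div hk0]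
      try tauto
    have e4 : (P.map V) (Prod.mk w ⁻¹' S') =
        P ({ω | X i ω > x / w.1 i} ∩ {ω | Y j ω > y / w.2 j}) := by
      rw [Measure.map_apply hV (hS'meas.preimage measurable_prodMk_left)]
      congr 1
      ext ω
      simp only [hS', Set.mem_preimage, Set.mem_inter_iff, Set.mem_setOf_eq,
        mul_gt_iff_gt_div hi0, mul_gt_iff_gt_div hj0]
      try tauto
    have p1M : M ≤ a x / w.1 k := by
      rw [le_div_iff₀ hk0]
      calc M * w.1 k ≤ M * bk := mul_le_mul_of_nonneg_left hwkb hM0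
        _ = bk * M := mul_comm _ _
        _ ≤ a x := h3x
    have p2M : M ≤ x / w.1 i := by
      rw [le_div_iff₀ hi0]
      calc M * w.1 i ≤ M * bi := mul_le_mul_of_nonneg_left hwib hM0
        _ = bi * M := mul_comm _ _
        _ ≤ x := h2x
    have p3M : M ≤ y / w.2 j := by
      rw [le_div_iff₀ hj0]
      calc M * w.2 j ≤ M * dj := mul_le_mul_of_nonneg_left hwjb hM0
        _ = dj * M := mul_comm _ _
        _ ≤ y := h2y
    rw [e3, e4]
    exact hM _ _ _ p1M p2M p3M
  -- combine
  have hnum : P ({ω | Θ i ω * X i ω > x} ∩ {ω | Δ j ω * Y j ω > y} ∩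
      {ω | Θ k ω * |X k ω| > a x}) ≤ ENNReal.ofReal (ε / 2) *
      P ({ω | Θ i ω * X i ω > x} ∩ {ω | Δ j ω * Y j ω > y}) := by
    rw [e1, e2]
    calc ∫⁻ w, (P.map V) (Prod.mk w ⁻¹' S) ∂(P.map W)
        ≤ ∫⁻ w, ENNReal.ofReal (ε / 2) * (P.map V) (Prod.mk w ⁻¹' S') ∂(P.map W) :=
          lintegral_mono_ae hbound
      _ = ENNReal.ofReal (ε / 2) * ∫⁻ w, (P.map V) (Prod.mk w ⁻¹' S') ∂(P.map W) :=
          lintegral_const_mul' _ _ ENNReal.ofReal_ne_top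
  set PA := P ({ω | Θ i ω * X i ω > x} ∩ {ω | Δ j ω * Y j ω > y} ∩
      {ω | Θ k ω * |X k ω| > a x}) with hPA
  set PB := P ({ω | Θ i ω * X i ω > x} ∩ {ω | Δ j ω * Y j ω > y}) with hPB
  have hnn : 0 ≤ PA.toReal / PB.toReal :=
    div_nonneg ENNReal.toReal_nonneg ENNReal.toReal_nonneg
  rw [Real.norm_eq_abs, abs_of_nonneg hnn]
  have hnum_re : PA.toReal ≤ (ε / 2) * PB.toReal := by
    have hfin : ENNReal.ofReal (ε / 2) * PB ≠ ⊤ :=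
      ENNReal.mul_ne_top ENNReal.ofReal_ne_top (measure_ne_top P _)
    have := ENNReal.toReal_mono hfin hnum
    rwa [ENNReal.toReal_mul, ENNReal.toReal_ofReal (by positivity)] at this
  rcases eq_or_lt_of_le (ENNReal.toReal_nonneg : 0 ≤ PB.toReal) with hd | hd
  · have hz : PA.toReal = 0 := le_antisymm (by rw [← hd] at hnum_re; linarith)
      ENNReal.toReal_nonneg
    rw [hz, zero_div]
    exact hε
  · have hle : PA.toReal / PB.toReal ≤ ε / 2 := by rw [div_le_iff₀ hd]; linarith
    linarith [half_lt_self hε]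
end

section
/- If X is a nonnegative random variable whose distribution tail is regularly varying with index −α (α > 0), and g is a distortion function (nondecreasing, g(0)=0, g(1)=1) with ∫_1^∞ g(y^{−(α−k)}) dy < ∞ for some 0 < k < α, then the tail distortion risk measure satisfies ρ_g[X | X > VaR_p(X)] ∼ C_α(g) · VaR_p(X) as p → 1, where C_α(g) = ∫_0^1 y^{−1/α} g(dy) = 1 + ∫_1^∞ g(y^{−α}) dy. -/
open MeasureTheory Filter Topology

section Aux
open Set ENNReal

private lemma geom_step_aux (f : ℝ → ℝ) {r v0 : ℝ} (hv0 : 1 ≤ v0)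
    (hr : 0 ≤ r) (hstep : ∀ v, v0 ≤ v → f (2*v) ≤ r * f v) :
    ∀ n : ℕ, ∀ v, v0 ≤ v → f (v * 2^n) ≤ r^n * f v := by
  intro n
  induction n with
  | zero => intro v hv; simp
  | succ n ih =>
    intro v hv
    have hv1 : (1:ℝ) ≤ v := le_trans hv0 hv
    have h2n : (1:ℝ) ≤ 2^n := one_le_pow₀ (by norm_num)
    have hvv : v0 ≤ v * 2^n := le_trans hv (le_mul_of_one_le_right (by linarith) h2n)
    have : f (v * 2^(n+1)) = f (2 * (v * 2^n)) := by ring_nf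
    rw [this]
    calc f (2 * (v * 2^n)) ≤ r * f (v * 2^n) := hstep _ hvv
    _ ≤ r * (r^n * f v) := by
        have := ih v hv
        nlinarith [pow_nonneg hr n]
    _ = r^(n+1) * f v := by ring

private lemma potter_bound_aux (f : ℝ → ℝ) (hanti : Antitone f) (hpos : ∀ x, 0 < f x)
    {β v0 : ℝ} (hβ : 0 < β) (hv0 : 1 ≤ v0)
    (hstep : ∀ v, v0 ≤ v → f (2*v) ≤ 2^(-β) * f v) :
    ∀ v, v0 ≤ v → ∀ y, 1 ≤ y → f (v*y) ≤ 2^β * y^(-β) * f v := by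
  intro v hv y hy
  have hy0 : (0:ℝ) < y := by linarith
  set n : ℕ := ⌊Real.logb 2 y⌋₊ with hn
  have hlogb : (0:ℝ) ≤ Real.logb 2 y := Real.logb_nonneg (by norm_num) hy
  have h1 : (2:ℝ)^(n:ℝ) ≤ y := by
    have : ((n:ℝ)) ≤ Real.logb 2 y := Nat.floor_le hlogb
    calc (2:ℝ)^(n:ℝ) ≤ 2^(Real.logb 2 y) :=
          Real.rpow_le_rpow_of_exponent_le (by norm_num) this
    _ = y := Real.rpow_logb (by norm_num) (by norm_num) hy0
  have h2 : y < 2^((n:ℝ)+1) := by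
    have : Real.logb 2 y < (n:ℝ) + 1 := Nat.lt_floor_add_one _
    calc y = 2^(Real.logb 2 y) := (Real.rpow_logb (by norm_num) (by norm_num) hy0).symm
    _ < 2^((n:ℝ)+1) := Real.rpow_lt_rpow_of_exponent_lt (by norm_num) this
  have hstep' := geom_step_aux f hv0 (Real.rpow_nonneg (by norm_num) _) hstep n v hv
  have hmono : f (v * y) ≤ f (v * 2^n) := by
    apply hanti
    have : ((2:ℝ)^n : ℝ) = (2:ℝ)^(n:ℝ) := by rw [Real.rpow_natCast]
    rw [this]
    have hv1 : (0:ℝ) < v := by linarith [le_trans hv0 hv]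
    exact mul_le_mul_of_nonneg_left h1 hv1.le
  have hpow : ((2:ℝ)^(-β))^n = ((2:ℝ)^(n:ℝ))^(-β) := by
    rw [← Real.rpow_natCast ((2:ℝ)^(-β)) n, ← Real.rpow_mul (by norm_num),
      ← Real.rpow_mul (by norm_num)]
    ring_nf
  have hfinal : ((2:ℝ)^(n:ℝ))^(-β) ≤ 2^β * y^(-β) := by
    have hy2 : y / 2 < 2^(n:ℝ) := by
      have h22 : (2:ℝ)^((n:ℝ)+1) = 2 * 2^(n:ℝ) := by
        rw [Real.rpow_add (by norm_num), Real.rpow_one]; ring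
      rw [h22] at h2; linarith
    have hy2pos : 0 < y / 2 := by positivity
    have := Real.rpow_le_rpow_of_nonpos hy2pos hy2.le (neg_nonpos.mpr hβ.le)
    calc ((2:ℝ)^(n:ℝ))^(-β) ≤ (y/2)^(-β) := this
    _ = 2^β * y^(-β) := by
        rw [Real.div_rpow hy0.le (by norm_num), Real.rpow_neg (by norm_num : (0:ℝ) ≤ 2)]
        rw [div_eq_mul_inv, inv_inv, mul_comm]
  calc f (v*y) ≤ ((2:ℝ)^(-β))^n * f v := le_trans hmono hstep'
  _ = ((2:ℝ)^(n:ℝ))^(-β) * f v := by rw [hpow]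
  _ ≤ 2^β * y^(-β) * f v := by
      have := hpos v
      nlinarith [hfinal]

private lemma split_integral_aux (f g : ℝ → ℝ) {v : ℝ} (hv : 0 < v) (hfv : f v ≠ 0)
    (hg1 : g 1 = 1)
    (hint : IntegrableOn (fun y => g (f (v*y)/f v)) (Ioi 1)) :
    (∫ x in Ioi (0:ℝ), g (f (max x v)/f v))
      = v + v * ∫ y in Ioi (1:ℝ), g (f (v*y)/f v) := by
  have hIoi : IntegrableOn (fun x => g (f x / f v)) (Ioi v) := by
    have := (integrableOn_Ioi_comp_mul_left_iff (fun x => g (f x / f v)) 1 hv).mp hint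
    rwa [mul_one] at this
  have hIoccongr : EqOn (fun _ => (1:ℝ)) (fun x => g (f (max x v)/f v)) (Ioc 0 v) := by
    intro x hx
    simp [max_eq_right hx.2, div_self hfv, hg1]
  have hIoc : IntegrableOn (fun x => g (f (max x v)/f v)) (Ioc 0 v) := by
    refine IntegrableOn.congr_fun ?_ hIoccongr measurableSet_Ioc
    exact (integrableOn_const_iff).mpr (Or.inr (by rw [Real.volume_Ioc]; exact ENNReal.ofReal_lt_top))
  have hIoicongr : EqOn (fun x => g (f x / f v)) (fun x => g (f (max x v)/f v)) (Ioi v) := by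
    intro x hx
    simp only [max_eq_left (le_of_lt (Set.mem_Ioi.mp hx))]
  have hIoi' : IntegrableOn (fun x => g (f (max x v)/f v)) (Ioi v) :=
    IntegrableOn.congr_fun hIoi hIoicongr measurableSet_Ioi
  rw [← Set.Ioc_union_Ioi_eq_Ioi hv.le,
    setIntegral_union (Set.Ioc_disjoint_Ioi le_rfl) measurableSet_Ioi hIoc hIoi']
  congr 1
  · rw [setIntegral_congr_fun measurableSet_Ioc hIoccongr.symm, setIntegral_const,
      measureReal_def, Real.volume_Ioc, smul_eq_mul, mul_one, sub_zero, ENNReal.toReal_ofReal hv.le]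
  · rw [setIntegral_congr_fun measurableSet_Ioi hIoicongr.symm]
    have h := integral_comp_mul_left_Ioi (fun x => g (f x / f v)) 1 hv
    rw [mul_one, smul_eq_mul] at h
    rw [h]
    field_simp

end Aux

/-- Tail of a real random variable. -/
noncomputable def rvTail {Ω : Type*} [MeasurableSpace Ω] (P : Measure Ω)
    (X : Ω → ℝ) (x : ℝ) : ℝ := (P {ω | X ω > x}).toReal

/-- Value at Risk at level `p`. -/
noncomputable def VaR {Ω : Type*} [MeasurableSpace Ω] (P : Measure Ω)
    (X : Ω → ℝ) (p : ℝ) : ℝ := sInf {x : ℝ | p ≤ (P {ω | X ω ≤ x}).toReal}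

/-- Tail distortion risk measure
`ρ_g[X | X > VaR_p(X)] = ∫_0^∞ g(P(X > x | X > VaR_p(X))) dx`. -/
noncomputable def TDRM {Ω : Type*} [MeasurableSpace Ω] (P : Measure Ω)
    (X : Ω → ℝ) (g : ℝ → ℝ) (p : ℝ) : ℝ :=
  ∫ x in Set.Ioi (0:ℝ),
    g (rvTail P X (max x (VaR P X p)) / rvTail P X (VaR P X p))

section MainAux
open Set
variable {Ω : Type*} [MeasurableSpace Ω] (P : Measure Ω) [IsProbabilityMeasure P]
  (X : Ω → ℝ) (hXmeas : Measurable X)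

lemma rvTail_anti : Antitone (rvTail P X) := by
  intro a b hab
  exact ENNReal.toReal_mono (measure_ne_top P _)
    (measure_mono (fun ω h => lt_of_le_of_lt hab h))

include hXmeas in
lemma cdf_eq (x : ℝ) :
    (P {ω | X ω ≤ x}).toReal = 1 - rvTail P X x := by
  have hms : MeasurableSet {ω | X ω ≤ x} := hXmeas measurableSet_Iic
  have hcompl : {ω | X ω ≤ x}ᶜ = {ω | X ω > x} := by
    ext ω; simp [not_le]
  have hsum : P {ω | X ω ≤ x} + P {ω | X ω > x} = 1 := by
    rw [← hcompl, measure_add_measure_compl hms, measure_univ]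
  have := congrArg ENNReal.toReal hsum
  rw [ENNReal.toReal_add (measure_ne_top P _) (measure_ne_top P _)] at this
  simp only [ENNReal.toReal_one] at this
  rw [rvTail]; linarith

lemma cdf_mono : Monotone (fun x => (P {ω | X ω ≤ x}).toReal) := by
  intro a b hab
  exact ENNReal.toReal_mono (measure_ne_top P _)
    (measure_mono (fun ω h => le_trans h hab))

include hXmeas in
lemma rvTail_nat_tendsto_zero :
    Tendsto (fun n : ℕ => rvTail P X n) atTop (𝓝 0) := by
  have hs : ∀ n : ℕ, NullMeasurableSet {ω | X ω > (n:ℝ)} P :=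
    fun n => (hXmeas measurableSet_Ioi).nullMeasurableSet
  have hanti : Antitone (fun n : ℕ => {ω | X ω > (n:ℝ)}) := by
    intro a b hab ω h
    simp only [Set.mem_setOf_eq] at h ⊢
    exact lt_of_le_of_lt (by exact_mod_cast hab : (a:ℝ) ≤ (b:ℝ)) h
  have hfin : ∃ n : ℕ, P {ω | X ω > (n:ℝ)} ≠ ⊤ := ⟨0, measure_ne_top P _⟩
  have hinter : (⋂ n : ℕ, {ω | X ω > (n:ℝ)}) = ∅ := by
    ext ω
    simp only [Set.mem_iInter, Set.mem_setOf_eq, Set.mem_empty_iff_false, iff_false, not_forall,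
      not_lt]
    obtain ⟨n, hn⟩ := exists_nat_gt (X ω)
    exact ⟨n, hn.le⟩
  have h := tendsto_measure_iInter_atTop hs hanti hfin
  rw [hinter, measure_empty] at h
  have := (ENNReal.tendsto_toReal (by simp)).comp h
  simpa [rvTail, Function.comp_def] using this

include hXmeas in
lemma VaR_tendsto_atTop (hpos : ∀ x : ℝ, 0 < rvTail P X x) :
    Tendsto (fun p => VaR P X p) (𝓝[<] (1:ℝ)) atTop := by
  rw [tendsto_atTop]
  intro M
  have hFM : (P {ω | X ω ≤ M}).toReal < 1 := by
    rw [cdf_eq P X hXmeas]; linarith [hpos M]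
  filter_upwards [Ioo_mem_nhdsLT_of_mem
    (show (1:ℝ) ∈ Set.Ioc ((P {ω | X ω ≤ M}).toReal) 1 from ⟨hFM, le_rfl⟩)] with p hp
  obtain ⟨hp1, hp2⟩ := hp
  have hne : ∃ x : ℝ, p ≤ (P {ω | X ω ≤ x}).toReal := by
    obtain ⟨n, hn⟩ := ((rvTail_nat_tendsto_zero P X hXmeas).eventually
      (gt_mem_nhds (show (0:ℝ) < 1 - p by linarith))).exists
    refine ⟨n, ?_⟩
    rw [cdf_eq P X hXmeas]; linarith
  apply le_csInf hne
  intro x hx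
  by_contra hlt
  push_neg at hlt
  have : (P {ω | X ω ≤ x}).toReal ≤ (P {ω | X ω ≤ M}).toReal :=
    cdf_mono P X hlt.le
  exact absurd (le_trans hx this) (not_le.mpr hp1)

end MainAux

/-- TDRM asymptotics for a regularly varying tail: if the tail of `X ≥ 0` is
regularly varying with index `-α` and the distortion function `g` satisfies
`∫_1^∞ g(y^{-(α-k)}) dy < ∞` for some `0 < k < α`, then
`ρ_g[X | X > VaR_p(X)] ∼ C_α(g) · VaR_p(X)` as `p → 1⁻`, where
`C_α(g) = 1 + ∫_1^∞ g(y^{-α}) dy`. -/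
theorem tdrm_regular_variation_asymptotics
    {Ω : Type*} [MeasurableSpace Ω] (P : Measure Ω) [IsProbabilityMeasure P]
    (X : Ω → ℝ) (hXmeas : Measurable X) (hXnonneg : ∀ᵐ ω ∂P, 0 ≤ X ω)
    (α : ℝ) (hα : 0 < α)
    (hpos : ∀ x : ℝ, 0 < rvTail P X x)
    (hRV : ∀ t : ℝ, 0 < t →
      Tendsto (fun x => rvTail P X (t * x) / rvTail P X x) atTop (𝓝 (t ^ (-α))))
    (g : ℝ → ℝ) (hgmono : Monotone g) (hg0 : g 0 = 0) (hg1 : g 1 = 1)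
    (hgint : ∃ k : ℝ, 0 < k ∧ k < α ∧
      IntegrableOn (fun y : ℝ => g (y ^ (-(α - k)))) (Set.Ioi (1:ℝ))) :
    Tendsto (fun p => TDRM P X g p / VaR P X p) (𝓝[<] 1)
      (𝓝 (1 + ∫ y in Set.Ioi (1:ℝ), g (y ^ (-α)))) := by
  classical
  obtain ⟨k, hk0, hkα, hgi⟩ := hgint
  set f : ℝ → ℝ := rvTail P X with hfdef
  have hf_anti : Antitone f := rvTail_anti P X
  have hf_meas : Measurable f := hf_anti.measurable
  have hg_meas : Measurable g := hgmono.measurable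
  have hgnonneg : ∀ t : ℝ, 0 ≤ t → 0 ≤ g t := fun t ht => hg0 ▸ hgmono ht
  set β : ℝ := α - k/2 with hβdef
  have hβ : 0 < β := by rw [hβdef]; linarith
  have hβα : β < α := by rw [hβdef]; linarith
  -- Step bound from regular variation
  have h2lt : (2:ℝ)^(-α) < 2^(-β) :=
    Real.rpow_lt_rpow_of_exponent_lt (by norm_num) (by linarith)
  have hev : ∀ᶠ v in atTop, f (2*v) / f v ≤ 2^(-β) :=
    (hRV 2 (by norm_num)).eventually (ge_mem_nhds h2lt)
  obtain ⟨v0', hv0'⟩ := eventually_atTop.mp hev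
  set v0 : ℝ := max v0' 1 with hv0def
  have hv01 : (1:ℝ) ≤ v0 := le_max_right _ _
  have hstep : ∀ v, v0 ≤ v → f (2*v) ≤ 2^(-β) * f v := by
    intro v hv
    have h := hv0' v (le_trans (le_max_left _ _) hv)
    rw [div_le_iff₀ (hpos v)] at h
    linarith [h]
  have hpotter := potter_bound_aux f hf_anti hpos hβ hv01 hstep
  -- The threshold for the domination
  set Y0 : ℝ := max 2 ((2:ℝ)^(2*β/k)) with hY0def
  have hY0pot : ∀ y : ℝ, Y0 ≤ y → 2^β * y^(-β) ≤ y^(-(α-k)) := by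
    intro y hy
    have hy2 : (2:ℝ) ≤ y := le_trans (le_max_left _ _) hy
    have hy0 : (0:ℝ) < y := by linarith
    have h1 : (2:ℝ)^β ≤ y^(k/2) := by
      have hle : ((2:ℝ)^(2*β/k)) ≤ y := le_trans (le_max_right _ _) hy
      have h2 := Real.rpow_le_rpow (by positivity) hle (by positivity : (0:ℝ) ≤ k/2)
      rwa [← Real.rpow_mul (by norm_num : (0:ℝ) ≤ 2),
        show 2*β/k*(k/2) = β by field_simp] at h2
    have hsplit : y^(-(α-k)) = y^(k/2) * y^(-β) := by
      rw [← Real.rpow_add hy0]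
      congr 1
      rw [hβdef]; ring
    rw [hsplit]
    have hyβ : (0:ℝ) < y^(-β) := Real.rpow_pos_of_pos hy0 _
    nlinarith
  -- The dominating function
  set bound : ℝ → ℝ :=
    fun y => Set.indicator (Set.Ioc 1 Y0) (fun _ => (1:ℝ)) y + g (y^(-(α-k))) with hbddef
  have hbound_nonneg : ∀ y : ℝ, 1 < y → 0 ≤ bound y := by
    intro y hy
    have h1 : (0:ℝ) ≤ Set.indicator (Set.Ioc 1 Y0) (fun _ => (1:ℝ)) y :=
      Set.indicator_nonneg (fun _ _ => by norm_num) y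
    have h2 : (0:ℝ) ≤ g (y^(-(α-k))) := hgnonneg _ (Real.rpow_nonneg (by linarith) _)
    rw [hbddef]; positivity
  have hbound_int : IntegrableOn bound (Set.Ioi 1) := by
    apply MeasureTheory.Integrable.add ?_ hgi
    have hind : Integrable (Set.indicator (Set.Ioc (1:ℝ) Y0) (fun _ => (1:ℝ))) := by
      rw [integrable_indicator_iff measurableSet_Ioc]
      exact (integrableOn_const_iff).mpr (Or.inr (by rw [Real.volume_Ioc]; exact ENNReal.ofReal_lt_top))
    exact hind.integrableOn
  -- the key pointwise estimate
  have key : ∀ v, v0 ≤ v → ∀ y : ℝ, y ∈ Set.Ioi (1:ℝ) → ‖g (f (v*y)/f v)‖ ≤ bound y := by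
    intro v hv y hy
    have hy1 : (1:ℝ) < y := hy
    have hv1 : (1:ℝ) ≤ v := le_trans hv01 hv
    have hfv : 0 < f v := hpos v
    have harg0 : 0 ≤ f (v*y) / f v := le_of_lt (div_pos (hpos _) hfv)
    have harg1 : f (v*y) / f v ≤ 1 := by
      rw [div_le_one hfv]
      exact hf_anti (le_mul_of_one_le_right (by linarith : (0:ℝ) ≤ v) hy1.le)
    have hgle1 : g (f (v*y)/f v) ≤ 1 := hg1 ▸ hgmono harg1
    have hgge0 : 0 ≤ g (f (v*y)/f v) := hgnonneg _ harg0
    rw [Real.norm_eq_abs, abs_of_nonneg hgge0]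
    by_cases hyY : y ≤ Y0
    · have hindy : Set.indicator (Set.Ioc 1 Y0) (fun _ => (1:ℝ)) y = 1 :=
        Set.indicator_of_mem (Set.mem_Ioc.mpr ⟨hy1, hyY⟩) _
      have h2 : (0:ℝ) ≤ g (y^(-(α-k))) := hgnonneg _ (Real.rpow_nonneg (by linarith) _)
      rw [hbddef]
      simp only [hindy]
      linarith
    · push_neg at hyY
      have hpot := hpotter v hv y hy1.le
      have harg : f (v*y)/f v ≤ 2^β * y^(-β) := by
        rw [div_le_iff₀ hfv]; linarith
      have hle : g (f (v*y)/f v) ≤ g (y^(-(α-k))) :=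
        hgmono (le_trans harg (hY0pot y hyY.le))
      have hindy : Set.indicator (Set.Ioc 1 Y0) (fun _ => (1:ℝ)) y = 0 :=
        Set.indicator_of_notMem (fun h => absurd h.2 (not_le.mpr hyY)) _
      rw [hbddef]
      simp only [hindy]
      linarith
  -- integrability of the rescaled integrand
  have hmeasv : ∀ v : ℝ, AEStronglyMeasurable (fun y => g (f (v*y)/f v))
      (volume.restrict (Set.Ioi (1:ℝ))) := by
    intro v
    exact (hg_meas.comp ((hf_meas.comp (measurable_const_mul v)).div_const (f v))).aestronglyMeasurable
  have hIntOn : ∀ v, v0 ≤ v → IntegrableOn (fun y => g (f (v*y)/f v)) (Set.Ioi 1) := by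
    intro v hv
    refine Integrable.mono hbound_int (hmeasv v) ?_
    filter_upwards [ae_restrict_mem measurableSet_Ioi] with y hy
    rw [Real.norm_eq_abs (bound y), abs_of_nonneg (hbound_nonneg y hy)]
    exact key v hv y hy
  -- a.e. pointwise convergence
  have hD : {t : ℝ | ¬ContinuousAt g t}.Countable := hgmono.countable_not_continuousAt
  have hE : {y : ℝ | 1 < y ∧ ¬ContinuousAt g (y^(-α))}.Countable := by
    refine Set.Countable.mono (fun y hy => ?_) (hD.image (fun t => t ^ (-α)⁻¹))
    obtain ⟨hy1, hy2⟩ := hy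
    exact ⟨y^(-α), hy2, Real.rpow_rpow_inv (by linarith) (by linarith : (-α) ≠ 0)⟩
  have hlim : ∀ᵐ y ∂(volume.restrict (Set.Ioi (1:ℝ))),
      Tendsto (fun v => g (f (v*y)/f v)) atTop (𝓝 (g (y^(-α)))) := by
    have hE0 : volume {y : ℝ | 1 < y ∧ ¬ContinuousAt g (y^(-α))} = 0 := hE.measure_zero _
    have h1 : ∀ᵐ y ∂(volume.restrict (Set.Ioi (1:ℝ))),
        y ∉ {y : ℝ | 1 < y ∧ ¬ContinuousAt g (y^(-α))} :=
      ae_mono Measure.restrict_le_self ((measure_eq_zero_iff_ae_notMem (μ := volume)).mp hE0)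
    filter_upwards [ae_restrict_mem measurableSet_Ioi, h1] with y hy hyE
    have hy1 : (1:ℝ) < y := hy
    have hcont : ContinuousAt g (y^(-α)) := by
      by_contra hc; exact hyE ⟨hy1, hc⟩
    have htd : Tendsto (fun v => f (v*y)/f v) atTop (𝓝 (y^(-α))) := by
      have heq : (fun v => f (v*y)/f v) = (fun x => f (y*x)/f x) := by
        funext x; rw [mul_comm]
      rw [heq]
      exact hRV y (by linarith)
    exact hcont.tendsto.comp htd
  -- dominated convergence
  have hDCT : Tendsto (fun v => ∫ y in Set.Ioi (1:ℝ), g (f (v*y)/f v)) atTop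
      (𝓝 (∫ y in Set.Ioi (1:ℝ), g (y^(-α)))) := by
    refine MeasureTheory.tendsto_integral_filter_of_dominated_convergence bound
      (Eventually.of_forall hmeasv) ?_ hbound_int hlim
    filter_upwards [eventually_ge_atTop v0] with v hv
    filter_upwards [ae_restrict_mem measurableSet_Ioi] with y hy
    exact key v hv y hy
  -- assemble
  have hVaR : Tendsto (fun p => VaR P X p) (𝓝[<] (1:ℝ)) atTop :=
    VaR_tendsto_atTop P X hXmeas hpos
  have hfinal : Tendsto (fun v => 1 + ∫ y in Set.Ioi (1:ℝ), g (f (v*y)/f v)) atTop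
      (𝓝 (1 + ∫ y in Set.Ioi (1:ℝ), g (y^(-α)))) := tendsto_const_nhds.add hDCT
  have hcomp := hfinal.comp hVaR
  refine Tendsto.congr' ?_ hcomp
  filter_upwards [hVaR.eventually (eventually_ge_atTop v0)] with p hp
  have hv1 : (1:ℝ) ≤ VaR P X p := le_trans hv01 hp
  have hvpos : (0:ℝ) < VaR P X p := by linarith
  have hTD : TDRM P X g p
      = ∫ x in Set.Ioi (0:ℝ), g (f (max x (VaR P X p)) / f (VaR P X p)) := rfl
  simp only [Function.comp]
  rw [hTD, split_integral_aux f g hvpos (hpos _).ne' hg1 (hIntOn _ hp)]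
  field_simp
end
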